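/- arXiv:2409.01654 — 9 statements merged into one kernel-verified Lean document; each statement's English description precedes it below -/
import Mathlib

section
/- Let k ≥ m ≥ r ≥ 2 be integers and let (v_1, …, v_m) be an ordered list of distinct vertices. Suppose H is an r-graph on {v_1, …, v_m} such that for every j with r ≤ j ≤ m, the quasi-sunflower S^r(v_1, …, v_j) is contained in H. Then every pair of distinct vertices among v_1, …, v_m is contained in some edge of H; consequently, for every homomorphism φ from H to K_k^r, the values φ(v_1), …, φ(v_m) are pairwise distinct. -/
/-- Quasi-sunflower fact: if H contains the quasi-sunflower S^r(v_1,…,v_j) (0-indexed: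
v 0, …, v (j-1)) for every r ≤ j ≤ m, then every pair of the vertices v 0, …, v (m-1)
lies in a common edge, and hence every homomorphism to K_k^r separates them. -/
theorem stmt5 {V : Type*} [DecidableEq V] (k m r : ℕ)
    (hr : 2 ≤ r) (hrm : r ≤ m) (hmk : m ≤ k)
    (v : ℕ → V) (hv : Set.InjOn v (Set.Iio m))
    (H : Finset (Finset V))
    (hedges : ∀ E ∈ H, E.card = r ∧ E ⊆ (Finset.range m).image v)
    (hsun : ∀ j, r ≤ j → j ≤ m →
      (∀ t, t < (j - 1) / (r - 1) →
        insert (v (j - 1)) ((Finset.Ico (t * (r - 1)) (t * (r - 1) + (r - 1))).image v) ∈ H) ∧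
      (Finset.Ico (j - r) j).image v ∈ H) :
    (∀ a b, a < m → b < m → a ≠ b → ∃ E ∈ H, v a ∈ E ∧ v b ∈ E) ∧
    (∀ φ : V → Fin k, (∀ E ∈ H, Set.InjOn φ ↑E) →
      ∀ a b, a < m → b < m → a ≠ b → φ (v a) ≠ φ (v b)) := by
  have key : ∀ a b, a < b → b < m → ∃ E ∈ H, v a ∈ E ∧ v b ∈ E := by
    intro a b hab hbm
    rcases lt_or_ge b r with hbr | hrb
    · -- both a, b < r: use the edge v[Ico 0 r] from j = r
      refine ⟨(Finset.Ico (r - r) r).image v, (hsun r le_rfl hrm).2, ?_, ?_⟩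
      · exact Finset.mem_image_of_mem v (by simp; omega)
      · exact Finset.mem_image_of_mem v (by simp; omega)
    · -- b ≥ r: use j = b + 1
      have hj1 : r ≤ b + 1 := by omega
      have hj2 : b + 1 ≤ m := by omega
      set s := r - 1 with hs
      have hs1 : 1 ≤ s := by omega
      have hda := Nat.div_add_mod a s
      have hdb := Nat.div_add_mod b s
      have hma := Nat.mod_lt a (show 0 < s by omega)
      have hmb := Nat.mod_lt b (show 0 < s by omega)
      rcases lt_or_ge (a / s) (b / s) with hdiv | hdiv
      · -- petal t = a / s
        have ht : a / s < (b + 1 - 1) / (r - 1) := by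
          simp only [hs, Nat.add_sub_cancel]; exact hdiv
        have hmem := (hsun (b + 1) hj1 hj2).1 (a / s) ht
        refine ⟨_, hmem, ?_, ?_⟩
        · refine Finset.mem_insert_of_mem (Finset.mem_image_of_mem v ?_)
          simp only [Finset.mem_Ico]
          constructor
          · exact Nat.div_mul_le_self a s
          · have hda' : a / s * s + a % s = a := by rw [mul_comm]; exact hda
            omega
        · simpa using Finset.mem_insert_self _ _
      · -- same block: use the core edge v[Ico (b+1-r) (b+1)]
        have hclose : b - a < s := by
          have heqd : a / s = b / s := le_antisymm (Nat.div_le_div_right (le_of_lt hab)) hdiv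
          rw [heqd] at hda
          omega
        refine ⟨_, (hsun (b + 1) hj1 hj2).2, ?_, ?_⟩
        · exact Finset.mem_image_of_mem v (by simp only [Finset.mem_Ico]; omega)
        · exact Finset.mem_image_of_mem v (by simp only [Finset.mem_Ico]; omega)
  have part1 : ∀ a b, a < m → b < m → a ≠ b → ∃ E ∈ H, v a ∈ E ∧ v b ∈ E := by
    intro a b ha hb hne
    rcases lt_or_gt_of_ne hne with h | h
    · exact key a b h hb
    · obtain ⟨E, hE, h1, h2⟩ := key b a h ha
      exact ⟨E, hE, h2, h1⟩
  refine ⟨part1, ?_⟩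
  intro φ hφ a b ha hb hne heq
  obtain ⟨E, hE, hva, hvb⟩ := part1 a b ha hb hne
  have : v a = v b := hφ E hE hva hvb heq
  exact hne (hv (Set.mem_Iio.2 ha) (Set.mem_Iio.2 hb) this)
end

section
/- For every integer k ≥ 2, the constant (3k-5)/(3k-2) is optimal in Bollobás' theorem: for every ε > 0 there exist arbitrarily large n and an n-vertex k-partite graph G without isolated vertices, with minimum degree δ(G) ≥ ((3k-5)/(3k-2) - ε)·n, that is not uniquely k-colorable. -/
namespace Stmt6Aux

def A (m j j' : ℕ) : Prop :=
  if j < 3*m then (if j' < 3*m then j/3 ≠ j'/3 else True)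
  else if j' < 3*m then True
  else (j - 3*m)/2 = (j' - 3*m)/2 ∧ j ≠ j'

def phi0 (m j : ℕ) : ℕ := if j < 3*m then j/3 else m + (j - 3*m) % 2

def theta0 (m j : ℕ) : ℕ :=
  if j < 3*m then j/3
  else if j - 3*m < 2 then m + (j - 3*m) % 2 else m + (j - 3*m + 1) % 2

lemma A_ne {m j j'} (h : A m j j') : j ≠ j' := by
  unfold A at h; split_ifs at h <;> omega

lemma phi0_ne {m j j'} (h : A m j j') : phi0 m j ≠ phi0 m j' := by
  unfold A at h; unfold phi0; split_ifs at h ⊢ <;> omega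

lemma theta0_ne {m j j'} (h : A m j j') : theta0 m j ≠ theta0 m j' := by
  unfold A at h; unfold theta0; split_ifs at h ⊢ <;> omega

lemma phi0_lt {m j} (_hj : j < 3*m+4) : phi0 m j < m+2 := by
  unfold phi0; split_ifs <;> omega

lemma theta0_lt {m j} (_hj : j < 3*m+4) : theta0 m j < m+2 := by
  unfold theta0; split_ifs <;> omega

lemma phi0_3m (m : ℕ) : phi0 m (3*m) = m := by unfold phi0; split_ifs <;> omega
lemma phi0_3m2 (m : ℕ) : phi0 m (3*m+2) = m := by unfold phi0; split_ifs <;> omega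
lemma theta0_3m (m : ℕ) : theta0 m (3*m) = m := by unfold theta0; split_ifs <;> omega
lemma theta0_3m2 (m : ℕ) : theta0 m (3*m+2) = m+1 := by unfold theta0; split_ifs <;> omega

def partner (m p : ℕ) : ℕ :=
  if p < 3*m then 3*m else if (p - 3*m) % 2 = 0 then p+1 else p-1

lemma partner_lt {m p} (hp : p < 3*m+4) : partner m p < 3*m+4 := by
  unfold partner; split_ifs <;> omega

lemma partner_A {m p} (hp : p < 3*m+4) : A m p (partner m p) := by
  unfold partner A; split_ifs <;> first | trivial | omega | (constructor <;> omega)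

lemma badset {m p} (hp : p < 3*m+4) :
    ∃ b0 b1 b2, ∀ q, q < 3*m+4 → ¬ A m p q → q = b0 ∨ q = b1 ∨ q = b2 := by
  by_cases h : p < 3*m
  · refine ⟨3*(p/3), 3*(p/3)+1, 3*(p/3)+2, fun q hq hA => ?_⟩
    unfold A at hA; split_ifs at hA <;> first | omega | exact absurd trivial hA
  · by_cases h2 : p - 3*m < 2
    · refine ⟨p, 3*m+2, 3*m+3, fun q hq hA => ?_⟩
      unfold A at hA; split_ifs at hA
      · exact absurd trivial hA
      · push_neg at hA; omega
    · refine ⟨p, 3*m, 3*m+1, fun q hq hA => ?_⟩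
      unfold A at hA; split_ifs at hA
      · exact absurd trivial hA
      · push_neg at hA; omega

end Stmt6Aux

open Stmt6Aux in
/-- Optimality of the constant (3k-5)/(3k-2) in Bollobás' theorem: for every ε > 0 there
are arbitrarily large n-vertex k-partite graphs (as 2-graphs) with no isolated vertices,
minimum degree at least ((3k-5)/(3k-2) - ε)·n, that are not uniquely k-colorable. -/
theorem stmt6 (k : ℕ) (hk : 2 ≤ k) (ε : ℝ) (hε : 0 < ε) (N : ℕ) :
    ∃ n : ℕ, N ≤ n ∧ ∃ H : Finset (Finset (Fin n)),
      (∀ E ∈ H, E.card = 2) ∧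
      (∀ x : Fin n, ∃ E ∈ H, x ∈ E) ∧
      (∃ φ : Fin n → Fin k, ∀ E ∈ H, Set.InjOn φ ↑E) ∧
      (∀ x : Fin n, ((3 * (k : ℝ) - 5) / (3 * (k : ℝ) - 2) - ε) * n ≤
        ((H.filter (fun E => x ∈ E)).card : ℝ)) ∧
      ∃ φ θ : Fin n → Fin k, (∀ E ∈ H, Set.InjOn φ ↑E) ∧ (∀ E ∈ H, Set.InjOn θ ↑E) ∧
        ¬ ∃ η : Equiv.Perm (Fin k), η ∘ φ = θ := by
  classical
  obtain ⟨m, rfl⟩ : ∃ m, k = m + 2 := ⟨k - 2, by omega⟩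
  clear hk
  set a := max N 1 with hadef
  have ha0 : 0 < a := lt_of_lt_of_le one_pos (le_max_right N 1)
  refine ⟨(3*m+4)*a, le_trans (le_max_left N 1) (Nat.le_mul_of_pos_left a (by omega)), ?_⟩
  set n := (3*m+4)*a with hn
  have hJlt : ∀ v : Fin n, (v:ℕ)/a < 3*m+4 := fun v =>
    (Nat.div_lt_iff_lt_mul ha0).mpr v.isLt
  set Adj : Fin n → Fin n → Prop := fun u v => A m ((u:ℕ)/a) ((v:ℕ)/a) with hAdj
  have hAdj_ne : ∀ {u v : Fin n}, Adj u v → u ≠ v := by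
    intro u v h e
    exact A_ne h (by rw [e])
  set H : Finset (Finset (Fin n)) :=
    Finset.image (fun p : Fin n × Fin n => ({p.1, p.2} : Finset (Fin n)))
      (Finset.univ.filter (fun p => Adj p.1 p.2)) with hH
  have hmemH : ∀ E ∈ H, ∃ u v : Fin n, Adj u v ∧ E = {u, v} := by
    intro E hE
    rw [hH, Finset.mem_image] at hE
    obtain ⟨p, hp, rfl⟩ := hE
    exact ⟨p.1, p.2, (Finset.mem_filter.mp hp).2, rfl⟩
  have hpairH : ∀ u v : Fin n, Adj u v → ({u, v} : Finset (Fin n)) ∈ H := by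
    intro u v h
    rw [hH, Finset.mem_image]
    exact ⟨(u, v), Finset.mem_filter.mpr ⟨Finset.mem_univ _, h⟩, rfl⟩
  -- vertex with given block index
  have hvert : ∀ b : ℕ, b < 3*m+4 → ∃ v : Fin n, (v:ℕ)/a = b := by
    intro b hb
    exact ⟨⟨b*a, Nat.mul_lt_mul_right ha0 |>.mpr hb⟩, Nat.mul_div_cancel b ha0⟩
  -- injOn pairs helper
  have injOn_pair : ∀ {u v : Fin n} {f : Fin n → Fin (m+2)}, (Adj u v → f u ≠ f v) →
      Adj u v → Set.InjOn f (↑({u, v} : Finset (Fin n))) := by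
    intro u v f hf hadj p hp q hq hpq
    simp only [Finset.coe_insert, Finset.coe_singleton, Set.mem_insert_iff,
      Set.mem_singleton_iff] at hp hq
    rcases hp with rfl | rfl <;> rcases hq with rfl | rfl
    · rfl
    · exact absurd hpq (hf hadj)
    · exact absurd hpq.symm (hf hadj)
    · rfl
  set φ : Fin n → Fin (m+2) := fun v => ⟨phi0 m ((v:ℕ)/a), phi0_lt (hJlt v)⟩ with hφdef
  set θ : Fin n → Fin (m+2) := fun v => ⟨theta0 m ((v:ℕ)/a), theta0_lt (hJlt v)⟩ with hθdef
  have hφproper : ∀ E ∈ H, Set.InjOn φ ↑E := by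
    intro E hE
    obtain ⟨u, v, hadj, rfl⟩ := hmemH E hE
    exact injOn_pair (fun h heq => phi0_ne h (congrArg Fin.val heq)) hadj
  have hθproper : ∀ E ∈ H, Set.InjOn θ ↑E := by
    intro E hE
    obtain ⟨u, v, hadj, rfl⟩ := hmemH E hE
    exact injOn_pair (fun h heq => theta0_ne h (congrArg Fin.val heq)) hadj
  refine ⟨H, ?_, ?_, ⟨φ, hφproper⟩, ?_, ⟨φ, θ, hφproper, hθproper, ?_⟩⟩
  · -- all edges have card 2
    intro E hE
    obtain ⟨u, v, hadj, rfl⟩ := hmemH E hE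
    exact Finset.card_pair (hAdj_ne hadj)
  · -- no isolated vertices
    intro x
    obtain ⟨y, hy⟩ := hvert (partner m ((x:ℕ)/a)) (partner_lt (hJlt x))
    have hadj : Adj x y := by rw [hAdj]; dsimp only; rw [hy]; exact partner_A (hJlt x)
    exact ⟨{x, y}, hpairH x y hadj, Finset.mem_insert_self x _⟩
  · -- min degree
    intro x
    -- count of a block
    have hFb : ∀ b : ℕ,
        (Finset.univ.filter (fun v : Fin n => (v:ℕ)/a = b)).card ≤ a := by
      intro b
      calc (Finset.univ.filter (fun v : Fin n => (v:ℕ)/a = b)).card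
          ≤ (Finset.range a).card := by
            apply Finset.card_le_card_of_injOn (fun v : Fin n => (v:ℕ) % a)
            · intro v _
              exact Finset.mem_range.mpr (Nat.mod_lt _ ha0)
            · intro v hv w hw hvw
              simp only [Finset.mem_coe, Finset.mem_filter] at hv hw
              have hmw : (v:ℕ) % a = (w:ℕ) % a := hvw
              apply Fin.ext
              have h1 := Nat.div_add_mod (v:ℕ) a
              have h2 := Nat.div_add_mod (w:ℕ) a
              rw [hv.2] at h1
              rw [hw.2] at h2
              rw [← h1, ← h2, hmw]
        _ = a := Finset.card_range a
    obtain ⟨b0, b1, b2, hb⟩ := badset (hJlt x)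
    have hCsub : (Finset.univ.filter (fun y : Fin n => ¬ Adj x y)) ⊆
        (Finset.univ.filter (fun v : Fin n => (v:ℕ)/a = b0)) ∪
        (Finset.univ.filter (fun v : Fin n => (v:ℕ)/a = b1)) ∪
        (Finset.univ.filter (fun v : Fin n => (v:ℕ)/a = b2)) := by
      intro y hy
      have hy' := (Finset.mem_filter.mp hy).2
      have := hb _ (hJlt y) hy'
      simp only [Finset.mem_union, Finset.mem_filter, Finset.mem_univ, true_and]
      tauto
    have hC : (Finset.univ.filter (fun y : Fin n => ¬ Adj x y)).card ≤ 3*a := by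
      calc (Finset.univ.filter (fun y : Fin n => ¬ Adj x y)).card
          ≤ _ := Finset.card_le_card hCsub
        _ ≤ _ + _ := Finset.card_union_le _ _
        _ ≤ (_ + _) + _ := by gcongr; exact Finset.card_union_le _ _
        _ ≤ a + a + a := by gcongr <;> [exact hFb b0; exact hFb b1; exact hFb b2]
        _ = 3*a := by ring
    have hsplit : (Finset.univ.filter (fun y : Fin n => Adj x y)).card +
        (Finset.univ.filter (fun y : Fin n => ¬ Adj x y)).card = n := by
      rw [Finset.card_filter_add_card_filter_not]
      exact Finset.card_fin n
    have hNx : n - 3*a ≤ (Finset.univ.filter (fun y : Fin n => Adj x y)).card := by omega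
    have hdeg : n - 3*a ≤ (H.filter (fun E => x ∈ E)).card := by
      refine le_trans hNx (Finset.card_le_card_of_injOn
        (fun y => ({x, y} : Finset (Fin n))) ?_ ?_)
      · intro y hy
        have hadj : Adj x y := (Finset.mem_filter.mp hy).2
        exact Finset.mem_filter.mpr ⟨hpairH x y hadj, Finset.mem_insert_self x _⟩
      · intro y hy z hz heq
        have hadjy : Adj x y := by
          simp only [Finset.coe_filter, Set.mem_setOf_eq] at hy; exact hy.2
        have heq' : ({x, y} : Finset (Fin n)) = {x, z} := heq
        have : y ∈ ({x, z} : Finset (Fin n)) := by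
          rw [← heq']; exact Finset.mem_insert_of_mem (Finset.mem_singleton_self y)
        rcases Finset.mem_insert.mp this with h | h
        · exact absurd h.symm (hAdj_ne hadjy)
        · exact Finset.mem_singleton.mp h
    have hnat : n - 3*a = (3*m+1)*a := by
      have h34 : (3*m+4) - 3 = 3*m+1 := by omega
      rw [hn, ← Nat.sub_mul, h34]
    have key : ((3*(m:ℝ)+1)) * a ≤ ((H.filter (fun E => x ∈ E)).card : ℝ) := by
      rw [hnat] at hdeg
      exact_mod_cast le_trans (le_of_eq (by push_cast; ring)) (Nat.cast_le.mpr hdeg)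
    have hnr : (n:ℝ) = (3*(m:ℝ)+4)*a := by rw [hn]; push_cast; ring
    have hεn : 0 ≤ ε * ((3*(m:ℝ)+4)*a) := by positivity
    have e1 : ((3*((m:ℝ)+2)-5)/(3*((m:ℝ)+2)-2) - ε) * ((3*(m:ℝ)+4)*a) =
        (3*(m:ℝ)+1)*a - ε*((3*(m:ℝ)+4)*a) := by
      have h4 : (3*((m:ℝ)+2)-2) ≠ 0 := by
        have : (0:ℝ) ≤ m := Nat.cast_nonneg m
        intro h; linarith
      field_simp
      ring
    push_cast
    rw [hnr, e1]
    linarith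
  · -- not uniquely colorable
    rintro ⟨η, hη⟩
    obtain ⟨u0, hu0⟩ := hvert (3*m) (by omega)
    obtain ⟨u2, hu2⟩ := hvert (3*m+2) (by omega)
    have hval : φ u0 = φ u2 := by
      apply Fin.ext
      show phi0 m ((u0:ℕ)/a) = phi0 m ((u2:ℕ)/a)
      rw [hu0, hu2, phi0_3m, phi0_3m2]
    have h0 : η (φ u0) = θ u0 := congrFun hη u0
    have h2 : η (φ u2) = θ u2 := congrFun hη u2
    rw [← hval] at h2
    rw [h0] at h2
    have : theta0 m ((u0:ℕ)/a) = theta0 m ((u2:ℕ)/a) := congrArg Fin.val h2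
    rw [hu0, hu2, theta0_3m, theta0_3m2] at this
    omega
end

section
/- For all integers k ≥ r ≥ 3 and m ≥ 1, the r-graph H_{k,r}(1,m) is k-partite, has no isolated vertices, and is not uniquely k-colorable: the two colorings ψ_1 and ψ_2 defined by ψ_1(V_i)=i for i≤k-2, ψ_1(V_{k-1,1})=ψ_1(V_{k-1,2})=k-1, ψ_1(V_{k,1})=ψ_1(V_{k,2})=k, and ψ_2(V_i)=i for i≤k-2, ψ_2(V_{k-1,1})=ψ_2(V_{k,2})=k-1, ψ_2(V_{k-1,2})=ψ_2(V_{k,1})=k, are both valid k-colorings of H_{k,r}(1,m) that are not related by any permutation of [k]. -/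
/-- The edge predicate of the construction H_{k,r}(1,m): vertex set Fin (k+2) × Fin m,
where the first coordinate is the part index: parts 0,…,k-3 are V_1,…,V_{k-2};
part k-2 is V_{k-1,1}, part k-1 is V_{k-1,2}, part k is V_{k,1}, part k+1 is V_{k,2}. -/
def constrIsEdge (k r m : ℕ) (e : Finset (Fin (k + 2) × Fin m)) : Prop :=
  e.card = r ∧
  (∀ x ∈ e, ∀ y ∈ e, x.1 = y.1 → x = y) ∧
  ((∀ x ∈ e, x.1.val ≠ k - 1 ∧ x.1.val ≠ k + 1) ∨
   (∀ x ∈ e, x.1.val ≠ k - 2 ∧ x.1.val ≠ k))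

/-- The r-graph H_{k,r}(1,m). -/
noncomputable def constrH (k r m : ℕ) : Finset (Finset (Fin (k + 2) × Fin m)) := by
  classical exact Finset.univ.filter (constrIsEdge k r m)

/-- The coloring ψ₁ as a function of the part index. -/
def psi1 (k : ℕ) (hk : 1 ≤ k) (p : Fin (k + 2)) : Fin k :=
  ⟨if p.val ≤ k - 1 then min p.val (k - 2) else k - 1, by split <;> omega⟩

/-- The coloring ψ₂ as a function of the part index. -/
def psi2 (k : ℕ) (hk : 1 ≤ k) (p : Fin (k + 2)) : Fin k :=
  ⟨if p.val ≤ k - 2 ∨ p.val = k + 1 then min p.val (k - 2) else k - 1, by split <;> omega⟩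

lemma exists_edge (k r m : ℕ) (hr : 3 ≤ r) (hrk : r ≤ k) (hm : 1 ≤ m)
    (x : Fin (k + 2) × Fin m) (b1 b2 : Fin (k + 2)) (hb : b1 ≠ b2)
    (hx1 : x.1 ≠ b1) (hx2 : x.1 ≠ b2) :
    ∃ E : Finset (Fin (k + 2) × Fin m), x ∈ E ∧ E.card = r ∧
      (∀ a ∈ E, ∀ y ∈ E, a.1 = y.1 → a = y) ∧ (∀ a ∈ E, a.1 ≠ b1 ∧ a.1 ≠ b2) := by
  classical
  set A : Finset (Fin (k + 2)) := Finset.univ \ {b1, b2} with hA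
  have hAcard : A.card = k := by
    rw [hA, Finset.card_sdiff_of_subset (Finset.subset_univ _)]
    simp [Finset.card_insert_of_notMem, hb]
  have hxA : x.1 ∈ A := by simp [hA, hx1, hx2]
  obtain ⟨T, hT, hTcard⟩ := Finset.exists_subset_card_eq
    (s := A.erase x.1) (n := r - 1)
    (by rw [Finset.card_erase_of_mem hxA, hAcard]; omega)
  set S : Finset (Fin (k + 2)) := insert x.1 T with hSdef
  have hxT : x.1 ∉ T := fun h => (Finset.mem_erase.mp (hT h)).1 rfl
  have hSA : S ⊆ A := by
    intro p hp
    rcases Finset.mem_insert.mp hp with h | h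
    · exact h ▸ hxA
    · exact Finset.mem_of_mem_erase (hT h)
  have hScard : S.card = r := by
    rw [hSdef, Finset.card_insert_of_notMem hxT, hTcard]; omega
  set f : Fin (k + 2) → Fin (k + 2) × Fin m :=
    fun p => (p, if p = x.1 then x.2 else ⟨0, hm⟩) with hf
  refine ⟨S.image f, ?_, ?_, ?_, ?_⟩
  · refine Finset.mem_image.mpr ⟨x.1, Finset.mem_insert_self _ _, ?_⟩
    simp [hf]
  · rw [Finset.card_image_of_injective _ (fun a b hab => congrArg Prod.fst hab), hScard]
  · rintro a ha y hy h1
    obtain ⟨p, _, rfl⟩ := Finset.mem_image.mp ha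
    obtain ⟨q, _, rfl⟩ := Finset.mem_image.mp hy
    simp only [hf] at h1 ⊢
    subst h1; rfl
  · rintro a ha
    obtain ⟨p, hp, rfl⟩ := Finset.mem_image.mp ha
    have := hSA hp
    rw [hA] at this
    simp only [Finset.mem_sdiff, Finset.mem_insert, Finset.mem_singleton] at this
    exact ⟨fun h => this.2 (Or.inl h), fun h => this.2 (Or.inr h)⟩

set_option maxHeartbeats 1000000 in
/-- For k ≥ r ≥ 3 and m ≥ 1, the r-graph H_{k,r}(1,m) is k-partite (via ψ₁), has no
isolated vertices, and has the two non-equivalent k-colorings ψ₁ and ψ₂; in particular it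
is not uniquely k-colorable. -/
theorem stmt7 (k r m : ℕ) (hr : 3 ≤ r) (hrk : r ≤ k) (hm : 1 ≤ m) :
    (∀ E ∈ constrH k r m, E.card = r) ∧
    (∀ x : Fin (k + 2) × Fin m, ∃ E ∈ constrH k r m, x ∈ E) ∧
    (∀ E ∈ constrH k r m, Set.InjOn (fun x : Fin (k + 2) × Fin m => psi1 k (by omega) x.1) ↑E) ∧
    (∀ E ∈ constrH k r m, Set.InjOn (fun x : Fin (k + 2) × Fin m => psi2 k (by omega) x.1) ↑E) ∧
    ¬ ∃ η : Equiv.Perm (Fin k),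
        η ∘ (fun x : Fin (k + 2) × Fin m => psi1 k (by omega) x.1) =
          (fun x : Fin (k + 2) × Fin m => psi2 k (by omega) x.1) := by
  classical
  have hmem : ∀ E, E ∈ constrH k r m ↔ constrIsEdge k r m E := by
    intro E; simp [constrH]
  refine ⟨?_, ?_, ?_, ?_, ?_⟩
  · intro E hE; exact ((hmem E).mp hE).1
  · intro x
    by_cases hx : x.1.val = k - 1 ∨ x.1.val = k + 1
    · -- use option B: avoid parts k-2 and k
      obtain ⟨E, hxE, hc, hinj, hav⟩ := exists_edge k r m hr hrk hm x
        ⟨k - 2, by omega⟩ ⟨k, by omega⟩ (by simp only [ne_eq, Fin.ext_iff]; omega)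
        (by simp only [ne_eq, Fin.ext_iff]; omega) (by simp only [ne_eq, Fin.ext_iff]; omega)
      refine ⟨E, (hmem E).mpr ⟨hc, hinj, Or.inr fun a ha => ?_⟩, hxE⟩
      have := hav a ha
      simp [Fin.ext_iff] at this
      omega
    · obtain ⟨E, hxE, hc, hinj, hav⟩ := exists_edge k r m hr hrk hm x
        ⟨k - 1, by omega⟩ ⟨k + 1, by omega⟩ (by simp only [ne_eq, Fin.ext_iff]; omega)
        (by simp only [ne_eq, Fin.ext_iff]; omega) (by simp only [ne_eq, Fin.ext_iff]; omega)
      refine ⟨E, (hmem E).mpr ⟨hc, hinj, Or.inl fun a ha => ?_⟩, hxE⟩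
      have := hav a ha
      simp [Fin.ext_iff] at this
      omega
  · intro E hE x hx y hy h
    obtain ⟨-, hinj, hdisj⟩ := (hmem E).mp hE
    refine hinj x hx y hy (Fin.ext ?_)
    have hxlt := x.1.isLt; have hylt := y.1.isLt
    simp only [psi1, Fin.mk.injEq] at h
    rcases hdisj with hA | hB
    · have h1 := hA x hx; have h2 := hA y hy
      split_ifs at h <;> omega
    · have h1 := hB x hx; have h2 := hB y hy
      split_ifs at h <;> omega
  · intro E hE x hx y hy h
    obtain ⟨-, hinj, hdisj⟩ := (hmem E).mp hE
    refine hinj x hx y hy (Fin.ext ?_)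
    have hxlt := x.1.isLt; have hylt := y.1.isLt
    simp only [psi2, Fin.mk.injEq] at h
    rcases hdisj with hA | hB
    · have h1 := hA x hx; have h2 := hA y hy
      split_ifs at h <;> omega
    · have h1 := hB x hx; have h2 := hB y hy
      split_ifs at h <;> omega
  · rintro ⟨η, hη⟩
    have hlt2 : k - 2 < k := by omega
    have hlt1 : k - 1 < k := by omega
    have h1 : η (psi1 k (by omega) ⟨k - 2, by omega⟩) = psi2 k (by omega) ⟨k - 2, by omega⟩ :=
      congrFun hη (⟨⟨k - 2, by omega⟩, ⟨0, hm⟩⟩ : Fin (k + 2) × Fin m)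
    have h2 : η (psi1 k (by omega) ⟨k - 1, by omega⟩) = psi2 k (by omega) ⟨k - 1, by omega⟩ :=
      congrFun hη (⟨⟨k - 1, by omega⟩, ⟨0, hm⟩⟩ : Fin (k + 2) × Fin m)
    have e1 : psi1 k (by omega) (⟨k - 2, by omega⟩ : Fin (k + 2)) = ⟨k - 2, hlt2⟩ := by
      apply Fin.ext; simp only [psi1]; split <;> omega
    have e2 : psi1 k (by omega) (⟨k - 1, by omega⟩ : Fin (k + 2)) = ⟨k - 2, hlt2⟩ := by
      apply Fin.ext; simp only [psi1]; split <;> omega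
    have e3 : psi2 k (by omega) (⟨k - 2, by omega⟩ : Fin (k + 2)) = ⟨k - 2, hlt2⟩ := by
      apply Fin.ext; simp only [psi2]; split <;> omega
    have e4 : psi2 k (by omega) (⟨k - 1, by omega⟩ : Fin (k + 2)) = ⟨k - 1, hlt1⟩ := by
      apply Fin.ext; simp only [psi2]; split <;> omega
    have hA : η ⟨k - 2, hlt2⟩ = ⟨k - 2, hlt2⟩ := (congrArg η e1).symm.trans (h1.trans e3)
    have hB : η ⟨k - 2, hlt2⟩ = ⟨k - 1, hlt1⟩ := (congrArg η e2).symm.trans (h2.trans e4)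
    have : (k - 2 : ℕ) = k - 1 := congrArg Fin.val (hA.symm.trans hB)
    omega
end

section
/- For all integers k ≥ r ≥ 3, and with n(m) = v(H_{k,r}(1,m)) = (k+2)m, the r-graph H_{k,r}(1,m) satisfies δ⁺_{r-1}(H_{k,r}(1,m)) = ((k-r+1)/(k+2))·n(m). Hence Φ_{k,r} ≥ (k-r+1)/(k+2), where Φ_{k,r} is the least real such that every n-vertex k-partite r-graph with no isolated vertices and δ⁺_{r-1} > Φ_{k,r}·n is uniquely k-colorable. -/
section Aux
open Finset

lemma mem_constrH {k r m : ℕ} {E : Finset (Fin (k + 2) × Fin m)} :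
    E ∈ constrH k r m ↔ constrIsEdge k r m E := by
  simp [constrH]

lemma codeg_aux (k r m : ℕ) (hr : 3 ≤ r) (hrk : r ≤ k) (a b : ℕ)
    (e : Finset (Fin (k+2) × Fin m)) (hcard : e.card = r - 1)
    (htrans : ∀ x ∈ e, ∀ y ∈ e, x.1 = y.1 → x = y)
    (havoid : ∀ x ∈ e, x.1.val ≠ a ∧ x.1.val ≠ b)
    (P : Finset (Fin (k+2) × Fin m) → Prop) [DecidablePred P]
    (himp : ∀ s : Finset (Fin (k+2) × Fin m),
      (∀ x ∈ s, x.1.val ≠ a ∧ x.1.val ≠ b) →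
      s.card = r → (∀ x ∈ s, ∀ y ∈ s, x.1 = y.1 → x = y) → P s) :
    (k - r + 1) * m ≤ (Finset.univ.filter (fun x => P (insert x e))).card := by
  classical
  set F : Finset (Fin (k+2)) :=
    univ.filter (fun p => p.val ≠ a ∧ p.val ≠ b ∧ p ∉ e.image Prod.fst) with hF
  have hFcard : k - r + 1 ≤ F.card := by
    have hneg : (univ.filter (fun p : Fin (k+2) =>
        ¬(p.val ≠ a ∧ p.val ≠ b ∧ p ∉ e.image Prod.fst))).card ≤ r + 1 := by
      have hsub : (univ.filter (fun p : Fin (k+2) =>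
          ¬(p.val ≠ a ∧ p.val ≠ b ∧ p ∉ e.image Prod.fst))) ⊆
          ((univ.filter (fun p : Fin (k+2) => p.val = a)) ∪
           (univ.filter (fun p : Fin (k+2) => p.val = b))) ∪ e.image Prod.fst := by
        intro p hp
        simp only [mem_filter, mem_univ, true_and, not_and_or, not_not, not_ne_iff] at hp
        simp only [mem_union, mem_filter, mem_univ, true_and]
        tauto
      have h1 : (univ.filter (fun p : Fin (k+2) => p.val = a)).card ≤ 1 :=
        Finset.card_le_one.mpr (by
          intro x hx y hy
          simp only [mem_filter] at hx hy
          exact Fin.ext (hx.2.trans hy.2.symm))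
      have h2 : (univ.filter (fun p : Fin (k+2) => p.val = b)).card ≤ 1 :=
        Finset.card_le_one.mpr (by
          intro x hx y hy
          simp only [mem_filter] at hx hy
          exact Fin.ext (hx.2.trans hy.2.symm))
      have h3 : (e.image Prod.fst).card ≤ r - 1 :=
        (Finset.card_image_le).trans (le_of_eq hcard)
      calc _ ≤ _ := Finset.card_le_card hsub
        _ ≤ _ := (Finset.card_union_le _ _)
        _ ≤ (1 + 1) + (r - 1) := by
            gcongr
            exact (Finset.card_union_le _ _).trans (by omega)
        _ ≤ r + 1 := by omega
    have htot := Finset.card_filter_add_card_filter_not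
      (s := (univ : Finset (Fin (k+2))))
      (p := fun p => p.val ≠ a ∧ p.val ≠ b ∧ p ∉ e.image Prod.fst)
    simp only [Finset.card_univ, Fintype.card_fin] at htot
    rw [← hF] at htot
    omega
  have hsub : F ×ˢ (univ : Finset (Fin m)) ⊆
      univ.filter (fun x => P (insert x e)) := by
    intro x hx
    rw [Finset.mem_product] at hx
    have hx1 := hx.1
    rw [hF, mem_filter] at hx1
    obtain ⟨-, hxa, hxb, hximg⟩ := hx1
    have hxe : x ∉ e := fun h => hximg (Finset.mem_image_of_mem Prod.fst h)
    rw [mem_filter]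
    refine ⟨Finset.mem_univ _, himp _ ?_ ?_ ?_⟩
    · intro y hy
      rcases Finset.mem_insert.mp hy with rfl | hy
      · exact ⟨hxa, hxb⟩
      · exact havoid y hy
    · rw [Finset.card_insert_of_notMem hxe, hcard]; omega
    · intro y hy z hz hyz
      rcases Finset.mem_insert.mp hy with hyx | hye <;>
        rcases Finset.mem_insert.mp hz with hzx | hze
      · rw [hyx, hzx]
      · exfalso; apply hximg
        have h := Finset.mem_image_of_mem Prod.fst hze
        rwa [← hyz, hyx] at h
      · exfalso; apply hximg
        have h := Finset.mem_image_of_mem Prod.fst hye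
        rwa [hyz, hzx] at h
      · exact htrans y hye z hze hyz
  calc (k - r + 1) * m ≤ F.card * m := Nat.mul_le_mul_right _ hFcard
    _ = (F ×ˢ (univ : Finset (Fin m))).card := by
        rw [Finset.card_product, Finset.card_univ, Fintype.card_fin]
    _ ≤ _ := Finset.card_le_card hsub


lemma partA (k r : ℕ) (hr : 3 ≤ r) (hrk : r ≤ k) (m : ℕ) (hm : 1 ≤ m) :
      Fintype.card (Fin (k + 2) × Fin m) = (k + 2) * m ∧
      (∀ e : Finset (Fin (k + 2) × Fin m), e.card = r - 1 →
        (∃ E ∈ constrH k r m, e ⊆ E) →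
        (k - r + 1) * m ≤ (Finset.univ.filter (fun x => insert x e ∈ constrH k r m)).card) ∧
      (∃ e : Finset (Fin (k + 2) × Fin m), e.card = r - 1 ∧ (∃ E ∈ constrH k r m, e ⊆ E) ∧
        (Finset.univ.filter (fun x => insert x e ∈ constrH k r m)).card = (k - r + 1) * m) := by
  classical
  refine ⟨by simp [mul_comm], ?_, ?_⟩
  · -- codegree lower bound
    rintro e hcard ⟨E, hE, heE⟩
    rw [mem_constrH] at hE
    obtain ⟨hEcard, hEtrans, hEav⟩ := hE
    have htrans : ∀ x ∈ e, ∀ y ∈ e, x.1 = y.1 → x = y :=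
      fun x hx y hy => hEtrans x (heE hx) y (heE hy)
    rcases hEav with h1 | h2
    · exact codeg_aux k r m hr hrk (k-1) (k+1) e hcard htrans
        (fun x hx => h1 x (heE hx)) (· ∈ constrH k r m)
        (fun s hav hc ht => mem_constrH.mpr ⟨hc, ht, Or.inl hav⟩)
    · exact codeg_aux k r m hr hrk (k-2) k e hcard htrans
        (fun x hx => h2 x (heE hx)) (· ∈ constrH k r m)
        (fun s hav hc ht => mem_constrH.mpr ⟨hc, ht, Or.inr hav⟩)
  · -- tight example
    set z : Fin m := ⟨0, hm⟩ with hz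
    have hBlt : ∀ p ∈ insert (k-2) (Finset.range (r-2)), p < k + 2 := by
      intro p hp
      simp only [Finset.mem_insert, Finset.mem_range] at hp
      omega
    set B : Finset (Fin (k+2)) := (insert (k-2) (Finset.range (r-2))).attachFin hBlt with hB
    set e0 : Finset (Fin (k+2) × Fin m) := B ×ˢ ({z} : Finset (Fin m)) with he0
    have mem_e0 : ∀ x : Fin (k+2) × Fin m,
        x ∈ e0 ↔ (x.1.val = k - 2 ∨ x.1.val < r - 2) ∧ x.2 = z := by
      intro x
      simp only [he0, hB, Finset.mem_product, Finset.mem_singleton, Finset.mem_attachFin,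
        Finset.mem_insert, Finset.mem_range]
    have he0card : e0.card = r - 1 := by
      rw [he0, Finset.card_product, Finset.card_singleton, hB, Finset.card_attachFin,
        Finset.card_insert_of_notMem (by simp; omega), Finset.card_range]
      omega
    -- the extending edge E0
    have hkle : k < k + 2 := by omega
    set w : Fin (k+2) × Fin m := (⟨k, hkle⟩, z) with hw
    have hwe0 : w ∉ e0 := by
      rw [mem_e0]
      simp only [hw]
      omega
    have hE0 : insert w e0 ∈ constrH k r m := by
      rw [mem_constrH]
      refine ⟨?_, ?_, Or.inl ?_⟩
      · rw [Finset.card_insert_of_notMem hwe0, he0card]; omega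
      · intro x hx y hy hxy
        have hx2 : x.2 = z := by
          rcases Finset.mem_insert.mp hx with h | h
          · rw [h]
          · exact ((mem_e0 x).mp h).2
        have hy2 : y.2 = z := by
          rcases Finset.mem_insert.mp hy with h | h
          · rw [h]
          · exact ((mem_e0 y).mp h).2
        exact Prod.ext hxy (hx2.trans hy2.symm)
      · intro x hx
        rcases Finset.mem_insert.mp hx with h | h
        · rw [h]; simp only [hw]; omega
        · have := ((mem_e0 x).mp h).1
          omega
    -- the filter is exactly A ×ˢ univ
    have hAlt : ∀ p ∈ insert k (Finset.Ico (r-2) (k-2)), p < k + 2 := by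
      intro p hp
      simp only [Finset.mem_insert, Finset.mem_Ico] at hp
      omega
    set A : Finset (Fin (k+2)) := (insert k (Finset.Ico (r-2) (k-2))).attachFin hAlt with hA
    have hfilter : Finset.univ.filter (fun x => insert x e0 ∈ constrH k r m)
        = A ×ˢ (univ : Finset (Fin m)) := by
      ext x
      rw [Finset.mem_filter, Finset.mem_product, hA, Finset.mem_attachFin]
      simp only [Finset.mem_univ, true_and, and_true, Finset.mem_insert, Finset.mem_Ico]
      constructor
      · intro hmem
        rw [mem_constrH] at hmem
        obtain ⟨hc, ht, hav⟩ := hmem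
        have hxe0 : x ∉ e0 := by
          intro hx
          rw [Finset.insert_eq_self.mpr hx, he0card] at hc
          omega
        have hxnotB : ¬ (x.1.val = k - 2 ∨ x.1.val < r - 2) := by
          intro hx
          apply hxe0
          have hmemB : (x.1, z) ∈ e0 := (mem_e0 _).mpr ⟨hx, rfl⟩
          have := ht x (Finset.mem_insert_self _ _) (x.1, z)
            (Finset.mem_insert_of_mem hmemB) rfl
          rw [this]; exact hmemB
        have hav1 : x.1.val ≠ k - 1 ∧ x.1.val ≠ k + 1 := by
          rcases hav with h1 | h2
          · exact h1 x (Finset.mem_insert_self _ _)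
          · exfalso
            have hk2mem : ((⟨k-2, by omega⟩ : Fin (k+2)), z) ∈ e0 :=
              (mem_e0 _).mpr ⟨Or.inl rfl, rfl⟩
            have := h2 _ (Finset.mem_insert_of_mem hk2mem)
            simp only at this
            omega
        have hlt := x.1.isLt
        omega
      · intro hx1
        have hxe0 : x ∉ e0 := by
          rw [mem_e0]
          rintro ⟨h, -⟩
          omega
        rw [mem_constrH]
        refine ⟨?_, ?_, Or.inl ?_⟩
        · rw [Finset.card_insert_of_notMem hxe0, he0card]; omega
        · intro u hu v hv huv
          rcases Finset.mem_insert.mp hu with hux | hue <;>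
            rcases Finset.mem_insert.mp hv with hvx | hve
          · rw [hux, hvx]
          · exfalso
            have hv1 := ((mem_e0 v).mp hve).1
            have : x.1.val = v.1.val := by rw [← hux, huv]
            omega
          · exfalso
            have hu1 := ((mem_e0 u).mp hue).1
            have : u.1.val = x.1.val := by rw [huv, hvx]
            omega
          · have hu2 := ((mem_e0 u).mp hue).2
            have hv2 := ((mem_e0 v).mp hve).2
            exact Prod.ext huv (hu2.trans hv2.symm)
        · intro u hu
          rcases Finset.mem_insert.mp hu with hux | hue
          · rw [hux]; omega
          · have := ((mem_e0 u).mp hue).1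
            omega
    exact ⟨e0, he0card, ⟨insert w e0, hE0, Finset.subset_insert _ _⟩, by
      rw [hfilter, Finset.card_product, Finset.card_univ, Fintype.card_fin, hA,
        Finset.card_attachFin, Finset.card_insert_of_notMem
          (by simp only [Finset.mem_Ico, not_and, not_lt]; omega),
        Nat.card_Ico]
      congr 1
      omega⟩


def colorF (k p : ℕ) : ℕ := if p ≤ k - 2 then p else if p = k - 1 then k - 2 else k - 1
def colorG (k p : ℕ) : ℕ := if p ≤ k - 1 then p else if p = k then k - 1 else k - 2

lemma colorF_lt (k p : ℕ) (hk : 3 ≤ k) : colorF k p < k := by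
  unfold colorF; split_ifs <;> omega
lemma colorG_lt (k p : ℕ) (hk : 3 ≤ k) : colorG k p < k := by
  unfold colorG; split_ifs <;> omega

lemma cover_aux (k r : ℕ) (hr : 3 ≤ r) (hrk : r ≤ k) (a b : ℕ) (x : Fin (k+2))
    (hxa : x.val ≠ a) (hxb : x.val ≠ b) :
    ∃ u : Finset (Fin (k+2)), u.card = r ∧ (∀ y ∈ u, y.val ≠ a ∧ y.val ≠ b) ∧ x ∈ u := by
  classical
  set P : Finset (Fin (k+2)) := univ.filter (fun p => p.val ≠ a ∧ p.val ≠ b) with hP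
  have hxP : x ∈ P := by rw [hP, mem_filter]; exact ⟨mem_univ _, hxa, hxb⟩
  have hPcard : r ≤ P.card := by
    have hneg : (univ.filter (fun p : Fin (k+2) => ¬(p.val ≠ a ∧ p.val ≠ b))).card ≤ 2 := by
      have hsub : (univ.filter (fun p : Fin (k+2) => ¬(p.val ≠ a ∧ p.val ≠ b))) ⊆
          (univ.filter (fun p : Fin (k+2) => p.val = a)) ∪
          (univ.filter (fun p : Fin (k+2) => p.val = b)) := by
        intro p hp
        simp only [mem_filter, mem_univ, true_and, not_and_or, not_not, not_ne_iff] at hp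
        simp only [mem_union, mem_filter, mem_univ, true_and]
        exact hp
      have h1 : (univ.filter (fun p : Fin (k+2) => p.val = a)).card ≤ 1 :=
        Finset.card_le_one.mpr (by
          intro u hu v hv
          simp only [mem_filter] at hu hv
          exact Fin.ext (hu.2.trans hv.2.symm))
      have h2 : (univ.filter (fun p : Fin (k+2) => p.val = b)).card ≤ 1 :=
        Finset.card_le_one.mpr (by
          intro u hu v hv
          simp only [mem_filter] at hu hv
          exact Fin.ext (hu.2.trans hv.2.symm))
      calc _ ≤ _ := Finset.card_le_card hsub
        _ ≤ _ := Finset.card_union_le _ _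
        _ ≤ 2 := by omega
    have htot := Finset.card_filter_add_card_filter_not
      (s := (univ : Finset (Fin (k+2)))) (p := fun p => p.val ≠ a ∧ p.val ≠ b)
    simp only [Finset.card_univ, Fintype.card_fin] at htot
    rw [← hP] at htot
    omega
  obtain ⟨u, hu1, hu2, hu3⟩ := Finset.exists_subsuperset_card_eq
    (Finset.singleton_subset_iff.mpr hxP) (by simp; omega) hPcard
  refine ⟨u, hu3, ?_, hu1 (Finset.mem_singleton_self x)⟩
  intro y hy
  have := hu2 hy
  rw [hP, mem_filter] at this
  exact this.2

lemma codegB_aux (k r : ℕ) (hr : 3 ≤ r) (hrk : r ≤ k) (a b : ℕ)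
    (e : Finset (Fin (k+2))) (hcard : e.card = r - 1)
    (hav : ∀ x ∈ e, x.val ≠ a ∧ x.val ≠ b)
    (P : Finset (Fin (k+2)) → Prop) [DecidablePred P]
    (himp : ∀ s : Finset (Fin (k+2)), (∀ x ∈ s, x.val ≠ a ∧ x.val ≠ b) → s.card = r → P s) :
    k - r + 1 ≤ (univ.filter (fun v => P (insert v e))).card := by
  classical
  set F : Finset (Fin (k+2)) := univ.filter (fun p => p.val ≠ a ∧ p.val ≠ b ∧ p ∉ e) with hF
  have hFcard : k - r + 1 ≤ F.card := by
    have hneg : (univ.filter (fun p : Fin (k+2) => ¬(p.val ≠ a ∧ p.val ≠ b ∧ p ∉ e))).card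
        ≤ r + 1 := by
      have hsub : (univ.filter (fun p : Fin (k+2) => ¬(p.val ≠ a ∧ p.val ≠ b ∧ p ∉ e))) ⊆
          ((univ.filter (fun p : Fin (k+2) => p.val = a)) ∪
           (univ.filter (fun p : Fin (k+2) => p.val = b))) ∪ e := by
        intro p hp
        simp only [mem_filter, mem_univ, true_and, not_and_or, not_not, not_ne_iff] at hp
        simp only [mem_union, mem_filter, mem_univ, true_and]
        tauto
      have h1 : (univ.filter (fun p : Fin (k+2) => p.val = a)).card ≤ 1 :=
        Finset.card_le_one.mpr (by
          intro u hu v hv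
          simp only [mem_filter] at hu hv
          exact Fin.ext (hu.2.trans hv.2.symm))
      have h2 : (univ.filter (fun p : Fin (k+2) => p.val = b)).card ≤ 1 :=
        Finset.card_le_one.mpr (by
          intro u hu v hv
          simp only [mem_filter] at hu hv
          exact Fin.ext (hu.2.trans hv.2.symm))
      calc _ ≤ _ := Finset.card_le_card hsub
        _ ≤ _ := Finset.card_union_le _ _
        _ ≤ (1 + 1) + (r - 1) := by
            have h3 : e.card ≤ r - 1 := le_of_eq hcard
            gcongr
            exact (Finset.card_union_le _ _).trans (by omega)
        _ ≤ r + 1 := by omega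
    have htot := Finset.card_filter_add_card_filter_not
      (s := (univ : Finset (Fin (k+2)))) (p := fun p => p.val ≠ a ∧ p.val ≠ b ∧ p ∉ e)
    simp only [Finset.card_univ, Fintype.card_fin] at htot
    rw [← hF] at htot
    omega
  refine hFcard.trans (Finset.card_le_card ?_)
  intro p hp
  rw [hF, mem_filter] at hp
  obtain ⟨-, hpa, hpb, hpe⟩ := hp
  rw [mem_filter]
  refine ⟨mem_univ _, himp _ ?_ ?_⟩
  · intro y hy
    rcases Finset.mem_insert.mp hy with rfl | hy
    · exact ⟨hpa, hpb⟩
    · exact hav y hy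
  · rw [Finset.card_insert_of_notMem hpe, hcard]; omega

set_option maxHeartbeats 2000000 in
lemma partB (k r : ℕ) (hr : 3 ≤ r) (hrk : r ≤ k) (c : ℝ)
    (hyp : ∀ n : ℕ, k ≤ n → ∀ H : Finset (Finset (Fin n)),
        (∀ E ∈ H, E.card = r) →
        (∃ φ : Fin n → Fin k, ∀ E ∈ H, Set.InjOn φ ↑E) →
        (∀ x : Fin n, ∃ E ∈ H, x ∈ E) →
        (∀ e : Finset (Fin n), e.card = r - 1 → (∃ E ∈ H, e ⊆ E) →
          c * n < ((Finset.univ.filter (fun v => insert v e ∈ H)).card : ℝ)) →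
        (∀ φ θ : Fin n → Fin k, (∀ E ∈ H, Set.InjOn φ ↑E) → (∀ E ∈ H, Set.InjOn θ ↑E) →
          ∃ η : Equiv.Perm (Fin k), η ∘ φ = θ)) :
    ((k : ℝ) - r + 1) / ((k : ℝ) + 2) ≤ c := by
  classical
  by_contra hc
  push_neg at hc
  have hk3 : 3 ≤ k := hr.trans hrk
  set H : Finset (Finset (Fin (k+2))) := univ.filter (fun E => E.card = r ∧
    ((∀ x ∈ E, x.val ≠ k - 1 ∧ x.val ≠ k + 1) ∨
     (∀ x ∈ E, x.val ≠ k - 2 ∧ x.val ≠ k))) with hH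
  have memH : ∀ E : Finset (Fin (k+2)), E ∈ H ↔ (E.card = r ∧
      ((∀ x ∈ E, x.val ≠ k - 1 ∧ x.val ≠ k + 1) ∨
       (∀ x ∈ E, x.val ≠ k - 2 ∧ x.val ≠ k))) := by
    intro E; rw [hH, mem_filter]; simp
  set φ : Fin (k+2) → Fin k := fun p => ⟨colorF k p.val, colorF_lt k p.val hk3⟩ with hφ
  set θ : Fin (k+2) → Fin k := fun p => ⟨colorG k p.val, colorG_lt k p.val hk3⟩ with hθ
  have hφinj : ∀ E ∈ H, Set.InjOn φ ↑E := by
    intro E hE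
    obtain ⟨-, hav⟩ := (memH E).mp hE
    intro x hx y hy hxy
    simp only [Finset.mem_coe] at hx hy
    have h1 : colorF k x.val = colorF k y.val := congrArg Fin.val hxy
    have hxlt := x.isLt
    have hylt := y.isLt
    refine Fin.ext ?_
    rcases hav with h | h
    · obtain ⟨hx1, hx2⟩ := h x hx
      obtain ⟨hy1, hy2⟩ := h y hy
      unfold colorF at h1; split_ifs at h1 <;> omega
    · obtain ⟨hx1, hx2⟩ := h x hx
      obtain ⟨hy1, hy2⟩ := h y hy
      unfold colorF at h1; split_ifs at h1 <;> omega
  have hθinj : ∀ E ∈ H, Set.InjOn θ ↑E := by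
    intro E hE
    obtain ⟨-, hav⟩ := (memH E).mp hE
    intro x hx y hy hxy
    simp only [Finset.mem_coe] at hx hy
    have h1 : colorG k x.val = colorG k y.val := congrArg Fin.val hxy
    have hxlt := x.isLt
    have hylt := y.isLt
    refine Fin.ext ?_
    rcases hav with h | h
    · obtain ⟨hx1, hx2⟩ := h x hx
      obtain ⟨hy1, hy2⟩ := h y hy
      unfold colorG at h1; split_ifs at h1 <;> omega
    · obtain ⟨hx1, hx2⟩ := h x hx
      obtain ⟨hy1, hy2⟩ := h y hy
      unfold colorG at h1; split_ifs at h1 <;> omega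
  have hcover : ∀ x : Fin (k+2), ∃ E ∈ H, x ∈ E := by
    intro x
    by_cases hx : x.val ≠ k - 1 ∧ x.val ≠ k + 1
    · obtain ⟨u, hu1, hu2, hu3⟩ := cover_aux k r hr hrk (k-1) (k+1) x hx.1 hx.2
      exact ⟨u, (memH u).mpr ⟨hu1, Or.inl hu2⟩, hu3⟩
    · have hxlt := x.isLt
      have hx' : x.val ≠ k - 2 ∧ x.val ≠ k := by
        rw [not_and_or, not_ne_iff, not_ne_iff] at hx
        constructor <;> omega
      obtain ⟨u, hu1, hu2, hu3⟩ := cover_aux k r hr hrk (k-2) k x hx'.1 hx'.2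
      exact ⟨u, (memH u).mpr ⟨hu1, Or.inr hu2⟩, hu3⟩
  have hcodeg : ∀ e : Finset (Fin (k+2)), e.card = r - 1 → (∃ E ∈ H, e ⊆ E) →
      c * ((k+2 : ℕ) : ℝ) < ((Finset.univ.filter (fun v => insert v e ∈ H)).card : ℝ) := by
    rintro e hcard ⟨E, hE, heE⟩
    obtain ⟨hEcard, hEav⟩ := (memH E).mp hE
    have hcount : k - r + 1 ≤ (Finset.univ.filter (fun v => insert v e ∈ H)).card := by
      rcases hEav with h | h
      · exact codegB_aux k r hr hrk (k-1) (k+1) e hcard (fun x hx => h x (heE hx))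
          (· ∈ H) (fun s hav hc' => (memH s).mpr ⟨hc', Or.inl hav⟩)
      · exact codegB_aux k r hr hrk (k-2) k e hcard (fun x hx => h x (heE hx))
          (· ∈ H) (fun s hav hc' => (memH s).mpr ⟨hc', Or.inr hav⟩)
    have h1 : ((k - r + 1 : ℕ) : ℝ) ≤ _ := Nat.cast_le.mpr hcount
    have h2 : c * ((k : ℝ) + 2) < (k : ℝ) - r + 1 :=
      (lt_div_iff₀ (by positivity : (0:ℝ) < (k:ℝ) + 2)).mp hc
    have h3 : ((k - r + 1 : ℕ) : ℝ) = (k : ℝ) - r + 1 := by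
      push_cast [Nat.cast_sub hrk]
      ring
    push_cast
    linarith
  obtain ⟨η, hη⟩ := hyp (k + 2) (by omega) H
    (fun E hE => ((memH E).mp hE).1) ⟨φ, hφinj⟩ hcover hcodeg φ θ hφinj hθinj
  have h1 := congrFun hη ⟨k, by omega⟩
  have h2 := congrFun hη ⟨k + 1, by omega⟩
  have hφeq : φ (⟨k, by omega⟩ : Fin (k+2)) = φ (⟨k+1, by omega⟩ : Fin (k+2)) := by
    refine Fin.ext ?_
    show colorF k k = colorF k (k+1)
    unfold colorF; split_ifs <;> omega
  have hθeq : θ (⟨k, by omega⟩ : Fin (k+2)) = θ (⟨k+1, by omega⟩ : Fin (k+2)) := by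
    have : η (φ (⟨k, by omega⟩ : Fin (k+2))) = η (φ (⟨k+1, by omega⟩ : Fin (k+2))) := by
      rw [hφeq]
    calc θ (⟨k, by omega⟩ : Fin (k+2)) = _ := h1.symm
      _ = _ := this
      _ = _ := h2
  have : colorG k k = colorG k (k+1) := congrArg Fin.val hθeq
  unfold colorG at this; split_ifs at this <;> omega


end Aux

/-- H_{k,r}(1,m) has n = (k+2)m vertices, minimum positive codegree exactly
(k-r+1)·m = ((k-r+1)/(k+2))·n, and (being not uniquely k-colorable) it witnesses that
Φ_{k,r} ≥ (k-r+1)/(k+2): any threshold c such that every n-vertex k-partite r-graph with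
no isolated vertices and positive codegree > c·n is uniquely k-colorable satisfies
c ≥ (k-r+1)/(k+2). -/
theorem stmt8 (k r : ℕ) (hr : 3 ≤ r) (hrk : r ≤ k) :
    (∀ m : ℕ, 1 ≤ m →
      Fintype.card (Fin (k + 2) × Fin m) = (k + 2) * m ∧
      (∀ e : Finset (Fin (k + 2) × Fin m), e.card = r - 1 →
        (∃ E ∈ constrH k r m, e ⊆ E) →
        (k - r + 1) * m ≤ (Finset.univ.filter (fun x => insert x e ∈ constrH k r m)).card) ∧
      (∃ e : Finset (Fin (k + 2) × Fin m), e.card = r - 1 ∧ (∃ E ∈ constrH k r m, e ⊆ E) ∧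
        (Finset.univ.filter (fun x => insert x e ∈ constrH k r m)).card = (k - r + 1) * m)) ∧
    (∀ c : ℝ,
      (∀ n : ℕ, k ≤ n → ∀ H : Finset (Finset (Fin n)),
        (∀ E ∈ H, E.card = r) →
        (∃ φ : Fin n → Fin k, ∀ E ∈ H, Set.InjOn φ ↑E) →
        (∀ x : Fin n, ∃ E ∈ H, x ∈ E) →
        (∀ e : Finset (Fin n), e.card = r - 1 → (∃ E ∈ H, e ⊆ E) →
          c * n < ((Finset.univ.filter (fun v => insert v e ∈ H)).card : ℝ)) →
        (∀ φ θ : Fin n → Fin k, (∀ E ∈ H, Set.InjOn φ ↑E) → (∀ E ∈ H, Set.InjOn θ ↑E) →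
          ∃ η : Equiv.Perm (Fin k), η ∘ φ = θ)) →
      ((k : ℝ) - r + 1) / ((k : ℝ) + 2) ≤ c) :=
  ⟨fun m hm => partA k r hr hrk m hm, fun c hyp => partB k r hr hrk c hyp⟩
end

section
/- Let n ≥ k ≥ 2 and let H be an n-vertex 2-graph (i.e. a graph) with no isolated vertices, admitting a proper k-coloring, and with minimum degree δ(H) > ((3k-5)/(3k-2))·n. Suppose φ and θ are two proper k-colorings of H (as maps to [k]) such that for every color i ∈ [k], the set θ(φ⁻¹(i)) has size at most 2. Then there is a permutation η of [k] with η ∘ φ = θ. -/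
open Finset

set_option maxHeartbeats 1600000 in
/-- Certificate for equivalence of colorings, graph case (r = 2): if a k-partite graph H
on n vertices without isolated vertices has minimum degree > ((3k-5)/(3k-2))·n and
φ, θ are proper k-colorings with |θ(φ⁻¹(i))| ≤ 2 for every color i, then θ and φ differ
by a permutation of the colors. -/
theorem stmt9 {V : Type*} [Fintype V] [DecidableEq V]
    (n k : ℕ) (hn : Fintype.card V = n) (hk : 2 ≤ k) (hkn : k ≤ n)
    (H : Finset (Finset V)) (hcard : ∀ E ∈ H, E.card = 2)
    (hiso : ∀ x : V, ∃ E ∈ H, x ∈ E)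
    (φ θ : V → Fin k)
    (hφ : ∀ E ∈ H, Set.InjOn φ ↑E) (hθ : ∀ E ∈ H, Set.InjOn θ ↑E)
    (hdeg : ∀ x : V, (3 * (k : ℝ) - 5) / (3 * (k : ℝ) - 2) * n <
      ((H.filter (fun E => x ∈ E)).card : ℝ))
    (hsmallim : ∀ i : Fin k, ((Finset.univ.filter (fun x => φ x = i)).image θ).card ≤ 2) :
    ∃ η : Equiv.Perm (Fin k), η ∘ φ = θ := by
  classical
  have hn2 : 2 ≤ n := le_trans hk hkn
  have hn0 : (0:ℝ) < n := by
    have : (2:ℝ) ≤ n := by exact_mod_cast hn2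
    linarith
  have hkR : (2:ℝ) ≤ k := by exact_mod_cast hk
  have hK : (0:ℝ) < 3*(k:ℝ)-2 := by linarith
  -- neighborhoods
  set N : V → Finset V := fun x => univ.filter (fun y => ({x,y} : Finset V) ∈ H) with hN
  have hNmem : ∀ x y : V, y ∈ N x ↔ ({x,y} : Finset V) ∈ H := by
    intro x y; simp [hN]
  have hNirr : ∀ x : V, x ∉ N x := by
    intro x hx
    rw [hNmem] at hx
    have h2 := hcard _ hx
    simp at h2
  have hedge : ∀ x y : V, y ∈ N x → x ≠ y ∧ φ x ≠ φ y ∧ θ x ≠ θ y := by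
    intro x y hy
    rw [hNmem] at hy
    have hxy : x ≠ y := by
      rintro rfl
      have h2 := hcard _ hy
      simp at h2
    refine ⟨hxy, ?_, ?_⟩
    · intro h
      exact hxy (hφ _ hy (by simp) (by simp) h)
    · intro h
      exact hxy (hθ _ hy (by simp) (by simp) h)
  have hNsymm : ∀ x y : V, y ∈ N x → x ∈ N y := by
    intro x y hy
    rw [hNmem] at hy ⊢
    rwa [Finset.pair_comm]
  -- degree equals neighborhood size
  have hdegN : ∀ x : V, (H.filter (fun E => x ∈ E)).card = (N x).card := by
    intro x
    refine (Finset.card_bij (fun y _ => ({x,y} : Finset V)) ?_ ?_ ?_).symm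
    · intro y hy
      rw [hNmem] at hy
      simp [hy]
    · intro y1 h1 y2 h2 heq
      have hy1 : y1 ≠ x := fun h => (hedge x y1 h1).1 h.symm
      have heq' : ({x, y1} : Finset V) = ({x, y2} : Finset V) := heq
      have hmem : y1 ∈ ({x, y2} : Finset V) := by rw [← heq']; simp
      simp only [mem_insert, mem_singleton] at hmem
      tauto
    · intro E hE
      simp only [mem_filter] at hE
      obtain ⟨hEH, hxE⟩ := hE
      obtain ⟨a, b, hab, rfl⟩ := Finset.card_eq_two.mp (hcard _ hEH)
      simp only [mem_insert, mem_singleton] at hxE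
      rcases hxE with rfl | rfl
      · exact ⟨b, (hNmem _ _).mpr hEH, rfl⟩
      · exact ⟨a, (hNmem _ _).mpr (by rwa [Finset.pair_comm]),
          show ({x, a} : Finset V) = {a, x} from Finset.pair_comm x a⟩
  -- every vertex has few non-neighbors
  have hnon : ∀ x : V, ((univ \ N x).card : ℝ) * (3*(k:ℝ)-2) < 3*n := by
    intro x
    have hle : (N x).card ≤ n := by
      rw [← hn, ← card_univ]; exact card_le_card (subset_univ _)
    have hcs : ((univ \ N x).card : ℝ) = (n:ℝ) - (N x).card := by
      rw [card_sdiff_of_subset (subset_univ _), card_univ, hn, Nat.cast_sub hle]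
    have hd := hdeg x
    rw [hdegN x] at hd
    rw [div_mul_eq_mul_div, div_lt_iff₀ hK] at hd
    rw [hcs]
    nlinarith
  -- common neighborhoods
  set CN : Finset V → Finset V := fun W => univ.filter (fun y => ∀ x ∈ W, y ∈ N x) with hCNdef
  have hCNmem : ∀ (W : Finset V) (y : V), y ∈ CN W ↔ ∀ x ∈ W, y ∈ N x := by
    intro W y; simp [hCNdef]
  have hCN : ∀ W : Finset V, W.card ≤ k - 1 → (n:ℝ) ≤ ((CN W).card : ℝ) * (3*(k:ℝ)-2) := by
    intro W hW
    have hsub : univ \ CN W ⊆ W.biUnion (fun x => univ \ N x) := by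
      intro y hy
      simp only [mem_sdiff, mem_univ, true_and, hCNmem] at hy
      push_neg at hy
      obtain ⟨x, hxW, hxN⟩ := hy
      exact mem_biUnion.mpr ⟨x, hxW, by simp [hxN]⟩
    have h2 : (univ \ CN W).card ≤ ∑ x ∈ W, (univ \ N x).card :=
      le_trans (card_le_card hsub) (card_biUnion_le)
    have h3 : (univ \ CN W).card = n - (CN W).card := by
      rw [card_sdiff_of_subset (subset_univ _), card_univ, hn]
    have h4 : (CN W).card ≤ n := by
      rw [← hn, ← card_univ]; exact card_le_card (subset_univ _)
    have hnat : n ≤ (CN W).card + ∑ x ∈ W, (univ \ N x).card := by omega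
    have hR : (n:ℝ) ≤ ((CN W).card : ℝ) + ∑ x ∈ W, ((univ \ N x).card : ℝ) := by
      exact_mod_cast hnat
    have hsum : ∑ x ∈ W, ((univ \ N x).card : ℝ) * (3*(k:ℝ)-2) ≤ W.card • (3*(n:ℝ)) :=
      Finset.sum_le_card_nsmul _ _ _ (fun x _ => le_of_lt (hnon x))
    have hWk : (W.card : ℝ) ≤ (k:ℝ) - 1 := by
      have h5 : (W.card : ℝ) ≤ ((k-1 : ℕ) : ℝ) := by exact_mod_cast hW
      rwa [Nat.cast_sub (by omega), Nat.cast_one] at h5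
    rw [nsmul_eq_mul, ← Finset.sum_mul] at hsum
    have e1 : ((n:ℝ) - (CN W).card) * (3*(k:ℝ)-2)
        ≤ (∑ x ∈ W, ((univ \ N x).card : ℝ)) * (3*(k:ℝ)-2) :=
      mul_le_mul_of_nonneg_right (by linarith) (le_of_lt hK)
    have e2 : (W.card:ℝ) * (3*(n:ℝ)) ≤ ((k:ℝ)-1) * (3*(n:ℝ)) :=
      mul_le_mul_of_nonneg_right hWk (by linarith)
    nlinarith [e1, e2, hsum]
  -- fibers of proper colorings are small
  have hfibcard : ∀ (ψ : V → Fin k), (∀ x y, y ∈ N x → ψ x ≠ ψ y) →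
      ∀ j : Fin k, ((univ.filter (fun x => ψ x = j)).card : ℝ) * (3*(k:ℝ)-2) ≤ 3*n := by
    intro ψ hψ j
    rcases (univ.filter (fun x => ψ x = j)).eq_empty_or_nonempty with he | hne
    · rw [he]
      simp only [card_empty, Nat.cast_zero, zero_mul]
      positivity
    · obtain ⟨x, hx⟩ := hne
      have hxj : ψ x = j := (mem_filter.mp hx).2
      have hsub : univ.filter (fun y => ψ y = j) ⊆ univ \ N x := by
        intro y hy
        have hyj : ψ y = j := (mem_filter.mp hy).2
        simp only [mem_sdiff, mem_univ, true_and]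
        intro hyN
        exact hψ x y hyN (by rw [hxj, hyj])
      have h1 : ((univ.filter (fun y => ψ y = j)).card : ℝ) ≤ ((univ \ N x).card : ℝ) := by
        exact_mod_cast card_le_card hsub
      have h2 := hnon x
      nlinarith
  -- surjectivity of proper colorings
  have hsurj : ∀ (ψ : V → Fin k), (∀ x y, y ∈ N x → ψ x ≠ ψ y) → ∀ j : Fin k, ∃ x, ψ x = j := by
    intro ψ hψ j0
    by_contra hcon
    push_neg at hcon
    have hfib0 : (univ.filter (fun x => ψ x = j0)) = ∅ := by
      ext x; simp [hcon x]
    have hpart : n = ∑ j ∈ (univ : Finset (Fin k)), (univ.filter (fun x => ψ x = j)).card := by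
      rw [← hn, ← card_univ]
      exact card_eq_sum_card_fiberwise (fun x _ => mem_univ _)
    have hsplit : ∑ j ∈ (univ : Finset (Fin k)), (univ.filter (fun x => ψ x = j)).card
        = ∑ j ∈ (univ : Finset (Fin k)).erase j0, (univ.filter (fun x => ψ x = j)).card := by
      rw [← Finset.sum_erase_add _ _ (mem_univ j0), hfib0]
      simp
    have hR : (n:ℝ) = ∑ j ∈ (univ : Finset (Fin k)).erase j0,
        ((univ.filter (fun x => ψ x = j)).card : ℝ) := by
      rw [hpart, hsplit]
      push_cast
      ring
    have hsum : ∑ j ∈ (univ : Finset (Fin k)).erase j0,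
        ((univ.filter (fun x => ψ x = j)).card : ℝ) * (3*(k:ℝ)-2)
        ≤ ((univ : Finset (Fin k)).erase j0).card • (3*(n:ℝ)) :=
      Finset.sum_le_card_nsmul _ _ _ (fun j _ => hfibcard ψ hψ j)
    have hcerase : (((univ : Finset (Fin k)).erase j0).card : ℝ) = (k:ℝ) - 1 := by
      rw [card_erase_of_mem (mem_univ _), card_univ, Fintype.card_fin,
        Nat.cast_sub (by omega), Nat.cast_one]
    rw [nsmul_eq_mul, ← Finset.sum_mul, ← hR, hcerase] at hsum
    nlinarith
  -- MAIN CLAIM: φ-classes are θ-monochromatic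
  have hmain : ∀ u v : V, φ u = φ v → θ u = θ v := by
    intro u v hφuv
    by_contra hθuv
    -- greedy clique construction
    have greedy : ∀ t : ℕ, t ≤ k - 2 → ∃ s : Finset V, s.card = t ∧ (∀ x ∈ s, x ∈ N u) ∧
        (∀ x ∈ s, x ∈ N v) ∧ (∀ x ∈ s, ∀ y ∈ s, x ≠ y → y ∈ N x) := by
      intro t
      induction t with
      | zero => intro _; exact ⟨∅, by simp⟩
      | succ t ih =>
        intro ht
        obtain ⟨s, hs1, hs2, hs3, hs4⟩ := ih (by omega)
        have hWc : (insert u (insert v s)).card ≤ k - 1 := by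
          have e1 := card_insert_le u (insert v s)
          have e2 := card_insert_le v s
          omega
        have hCNW := hCN _ hWc
        have hne : (CN (insert u (insert v s))).Nonempty := by
          rcases (CN (insert u (insert v s))).eq_empty_or_nonempty with he | h
          · rw [he] at hCNW
            simp at hCNW
            linarith
          · exact h
        obtain ⟨w, hw⟩ := hne
        have hwN : ∀ x ∈ insert u (insert v s), w ∈ N x := (hCNmem _ _).mp hw
        have hws : w ∉ s := fun hws => hNirr w (hwN w (by simp [hws]))
        refine ⟨insert w s, ?_, ?_, ?_, ?_⟩
        · rw [card_insert_of_notMem hws, hs1]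
        · intro x hx
          rcases mem_insert.mp hx with rfl | hx
          · exact hwN u (by simp)
          · exact hs2 x hx
        · intro x hx
          rcases mem_insert.mp hx with rfl | hx
          · exact hwN v (by simp)
          · exact hs3 x hx
        · intro x hx y hy hxy
          rcases mem_insert.mp hx with rfl | hxs <;> rcases mem_insert.mp hy with rfl | hys
          · exact absurd rfl hxy
          · exact hNsymm y x (hwN y (by simp [hys]))
          · exact hwN x (by simp [hxs])
          · exact hs4 x hxs y hys hxy
    obtain ⟨s, hs1, hs2, hs3, hs4⟩ := greedy (k-2) le_rfl
    have hφs : ∀ x ∈ s, φ x ≠ φ u := fun x hx h => (hedge u x (hs2 x hx)).2.1 h.symm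
    have hθsa : ∀ x ∈ s, θ x ≠ θ u := fun x hx h => (hedge u x (hs2 x hx)).2.2 h.symm
    have hθsb : ∀ x ∈ s, θ x ≠ θ v := fun x hx h => (hedge v x (hs3 x hx)).2.2 h.symm
    have hφinj : Set.InjOn φ ↑s := by
      intro x hx y hy hxy
      by_contra hne
      exact (hedge x y (hs4 x hx y hy hne)).2.1 hxy
    have hθinj : Set.InjOn θ ↑s := by
      intro x hx y hy hxy
      by_contra hne
      exact (hedge x y (hs4 x hx y hy hne)).2.2 hxy
    -- the missing φ-color j0
    have himgφ : (s.image φ).card = k - 2 := by rw [card_image_of_injOn hφinj, hs1]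
    have hiimg : φ u ∉ s.image φ := by
      rw [mem_image]
      rintro ⟨x, hx, hxφ⟩
      exact hφs x hx hxφ
    have hPcard : (insert (φ u) (s.image φ)).card = k - 1 := by
      rw [card_insert_of_notMem hiimg, himgφ]
      omega
    have hcompl : ((univ : Finset (Fin k)) \ insert (φ u) (s.image φ)).card = 1 := by
      rw [card_sdiff_of_subset (subset_univ _), card_univ, Fintype.card_fin, hPcard]
      omega
    obtain ⟨j0, hj0⟩ := Finset.card_eq_one.mp hcompl
    have hj0mem : j0 ∈ (univ : Finset (Fin k)) \ insert (φ u) (s.image φ) := by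
      rw [hj0]; exact mem_singleton_self _
    have hj0i : j0 ≠ φ u := by
      have h := (mem_sdiff.mp hj0mem).2
      simp only [mem_insert] at h
      tauto
    have missφ : ∀ c : Fin k, c ≠ φ u → (∀ x ∈ s, φ x ≠ c) → c = j0 := by
      intro c hc hcs
      have hcmem : c ∈ (univ : Finset (Fin k)) \ insert (φ u) (s.image φ) := by
        rw [mem_sdiff]
        refine ⟨mem_univ _, ?_⟩
        rw [mem_insert]
        push_neg
        refine ⟨hc, ?_⟩
        rw [mem_image]
        rintro ⟨x, hx, hxc⟩
        exact hcs x hx hxc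
      rw [hj0] at hcmem
      exact mem_singleton.mp hcmem
    -- θ colors cover
    have himgθ : (s.image θ).card = k - 2 := by rw [card_image_of_injOn hθinj, hs1]
    have haimg : θ u ∉ s.image θ := by
      rw [mem_image]; rintro ⟨x,hx,h⟩; exact hθsa x hx h
    have hbimg : θ v ∉ s.image θ := by
      rw [mem_image]; rintro ⟨x,hx,h⟩; exact hθsb x hx h
    have hanotin : θ u ∉ insert (θ v) (s.image θ) := by
      rw [mem_insert]
      push_neg
      exact ⟨hθuv, haimg⟩
    have hQ : insert (θ u) (insert (θ v) (s.image θ)) = univ := by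
      apply Finset.eq_univ_of_card
      rw [card_insert_of_notMem hanotin, card_insert_of_notMem hbimg, himgθ,
        Fintype.card_fin]
      omega
    have covθ : ∀ c : Fin k, c = θ u ∨ c = θ v ∨ ∃ x ∈ s, θ x = c := by
      intro c
      have hc : c ∈ insert (θ u) (insert (θ v) (s.image θ)) := hQ ▸ mem_univ c
      simp only [mem_insert, mem_image] at hc
      tauto
    -- basic memberships
    have hvns : v ∉ s := fun h => (hedge v v (hs3 v h)).1 rfl
    have huns : u ∉ s := fun h => (hedge u u (hs2 u h)).1 rfl
    have hscard1 : ∀ w : V, w ∉ s → (insert w s).card ≤ k - 1 := by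
      intro w hw
      rw [card_insert_of_notMem hw, hs1]
      omega
    -- common neighbors of {v} ∪ s lie in C_{j0} ∩ T_a
    have hsubz : CN (insert v s) ⊆
        (univ.filter (fun x => φ x = j0)) ∩ (univ.filter (fun x => θ x = θ u)) := by
      intro y hy
      have hyN := (hCNmem _ _).mp hy
      have hyv : y ∈ N v := hyN v (mem_insert_self _ _)
      have hys : ∀ x ∈ s, y ∈ N x := fun x hx => hyN x (mem_insert_of_mem hx)
      have hφyv : φ y ≠ φ u := by
        have h := (hedge v y hyv).2.1
        rw [← hφuv] at h
        exact fun hh => h hh.symm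
      have hφy : φ y = j0 := missφ _ hφyv (fun x hx => (hedge x y (hys x hx)).2.1)
      have hθy : θ y = θ u := by
        rcases covθ (θ y) with h | h | ⟨x, hx, h⟩
        · exact h
        · exact absurd h.symm (hedge v y hyv).2.2
        · exact absurd h (hedge x y (hys x hx)).2.2
      simp only [mem_inter, mem_filter, mem_univ, true_and]
      exact ⟨hφy, hθy⟩
    -- common neighbors of {u} ∪ s lie in C_{j0} ∩ T_b
    have hsubz' : CN (insert u s) ⊆
        (univ.filter (fun x => φ x = j0)) ∩ (univ.filter (fun x => θ x = θ v)) := by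
      intro y hy
      have hyN := (hCNmem _ _).mp hy
      have hyu : y ∈ N u := hyN u (mem_insert_self _ _)
      have hys : ∀ x ∈ s, y ∈ N x := fun x hx => hyN x (mem_insert_of_mem hx)
      have hφyu : φ y ≠ φ u := fun hh => (hedge u y hyu).2.1 hh.symm
      have hφy : φ y = j0 := missφ _ hφyu (fun x hx => (hedge x y (hys x hx)).2.1)
      have hθy : θ y = θ v := by
        rcases covθ (θ y) with h | h | ⟨x, hx, h⟩
        · exact absurd h.symm (hedge u y hyu).2.2
        · exact h
        · exact absurd h (hedge x y (hys x hx)).2.2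
      simp only [mem_inter, mem_filter, mem_univ, true_and]
      exact ⟨hφy, hθy⟩
    -- extract z ∈ C_{j0} ∩ T_a adjacent to all of s
    have hzCN := hCN _ (hscard1 v hvns)
    have hzne : (CN (insert v s)).Nonempty := by
      rcases (CN (insert v s)).eq_empty_or_nonempty with he | h
      · rw [he] at hzCN
        simp at hzCN
        linarith
      · exact h
    obtain ⟨z, hz⟩ := hzne
    have hzmem := hsubz hz
    have hzφ : φ z = j0 := by
      have := (mem_filter.mp (mem_inter.mp hzmem).1).2
      exact this
    have hzθ : θ z = θ u := by
      have := (mem_filter.mp (mem_inter.mp hzmem).2).2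
      exact this
    have hzs : ∀ x ∈ s, z ∈ N x := fun x hx => ((hCNmem _ _).mp hz) x (mem_insert_of_mem hx)
    have hzns : z ∉ s := fun h => hNirr z (hzs z h)
    -- extract z' ∈ C_{j0} ∩ T_b
    have hz'CN := hCN _ (hscard1 u huns)
    have hz'ne : (CN (insert u s)).Nonempty := by
      rcases (CN (insert u s)).eq_empty_or_nonempty with he | h
      · rw [he] at hz'CN
        simp at hz'CN
        linarith
      · exact h
    obtain ⟨z', hz'⟩ := hz'ne
    have hz'mem := hsubz' hz'
    have hz'φ : φ z' = j0 := (mem_filter.mp (mem_inter.mp hz'mem).1).2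
    have hz'θ : θ z' = θ v := (mem_filter.mp (mem_inter.mp hz'mem).2).2
    -- common neighbors of {z} ∪ s lie in C_i ∩ T_b
    have hsubw : CN (insert z s) ⊆
        (univ.filter (fun x => φ x = φ u)) ∩ (univ.filter (fun x => θ x = θ v)) := by
      intro y hy
      have hyN := (hCNmem _ _).mp hy
      have hyz : y ∈ N z := hyN z (mem_insert_self _ _)
      have hys : ∀ x ∈ s, y ∈ N x := fun x hx => hyN x (mem_insert_of_mem hx)
      have hφy : φ y = φ u := by
        by_contra hne
        have h := missφ _ hne (fun x hx => (hedge x y (hys x hx)).2.1)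
        exact (hedge z y hyz).2.1 (by rw [hzφ, h])
      have hθy : θ y = θ v := by
        rcases covθ (θ y) with h | h | ⟨x, hx, h⟩
        · exact absurd (by rw [hzθ, h]) (hedge z y hyz).2.2
        · exact h
        · exact absurd h (hedge x y (hys x hx)).2.2
      simp only [mem_inter, mem_filter, mem_univ, true_and]
      exact ⟨hφy, hθy⟩
    -- lower bounds on the two intersections
    have hXa : (n:ℝ) ≤ (((univ.filter (fun x => φ x = j0)) ∩
        (univ.filter (fun x => θ x = θ u))).card : ℝ) * (3*(k:ℝ)-2) := by
      refine le_trans hzCN ?_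
      have h := card_le_card hsubz
      have h' : ((CN (insert v s)).card : ℝ) ≤ (((univ.filter (fun x => φ x = j0)) ∩
          (univ.filter (fun x => θ x = θ u))).card : ℝ) := by exact_mod_cast h
      exact mul_le_mul_of_nonneg_right h' (le_of_lt hK)
    have hwCN := hCN _ (hscard1 z hzns)
    have hXb : (n:ℝ) ≤ (((univ.filter (fun x => φ x = φ u)) ∩
        (univ.filter (fun x => θ x = θ v))).card : ℝ) * (3*(k:ℝ)-2) := by
      refine le_trans hwCN ?_
      have h := card_le_card hsubw
      have h' : ((CN (insert z s)).card : ℝ) ≤ (((univ.filter (fun x => φ x = φ u)) ∩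
          (univ.filter (fun x => θ x = θ v))).card : ℝ) := by exact_mod_cast h
      exact mul_le_mul_of_nonneg_right h' (le_of_lt hK)
    -- the two big sets A and B
    set A : Finset V := (univ.filter (fun x => φ x = φ u)) ∪ (univ.filter (fun x => θ x = θ u))
      with hA
    set B : Finset V := (univ.filter (fun x => φ x = j0)) ∪ (univ.filter (fun x => θ x = θ v))
      with hB
    have hAsub : A ⊆ univ \ N u := by
      intro x hx
      simp only [hA, mem_union, mem_filter, mem_univ, true_and] at hx
      simp only [mem_sdiff, mem_univ, true_and]
      intro hxN
      rcases hx with h | h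
      · exact (hedge u x hxN).2.1 h.symm
      · exact (hedge u x hxN).2.2 h.symm
    have hBsub : B ⊆ univ \ N z' := by
      intro x hx
      simp only [hB, mem_union, mem_filter, mem_univ, true_and] at hx
      simp only [mem_sdiff, mem_univ, true_and]
      intro hxN
      rcases hx with h | h
      · exact (hedge z' x hxN).2.1 (by rw [hz'φ, h])
      · exact (hedge z' x hxN).2.2 (by rw [hz'θ, h])
    have hAR : ((A.card : ℝ)) * (3*(k:ℝ)-2) < 3*n := by
      have h1 : ((A.card : ℝ)) ≤ ((univ \ N u).card : ℝ) := by
        exact_mod_cast card_le_card hAsub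
      have h2 := hnon u
      nlinarith
    have hBR : ((B.card : ℝ)) * (3*(k:ℝ)-2) ≤ 3*n := by
      have h1 : ((B.card : ℝ)) ≤ ((univ \ N z').card : ℝ) := by
        exact_mod_cast card_le_card hBsub
      have h2 := hnon z'
      nlinarith
    -- θ-fiber over each x ∈ s is small
    have hTs : ∀ x ∈ s, ((univ.filter (fun y => θ y = θ x)).card : ℝ) * (3*(k:ℝ)-2) ≤ 3*n :=
      fun x _ => hfibcard θ (fun a b h => (hedge a b h).2.2) (θ x)
    -- cover of V
    have hcover : (univ : Finset V) ⊆
        (A ∪ B) ∪ s.biUnion (fun x => univ.filter (fun y => θ y = θ x)) := by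
      intro y _
      simp only [hA, hB, mem_union, mem_filter, mem_univ, true_and, mem_biUnion]
      rcases covθ (θ y) with h | h | ⟨x, hx, h⟩
      · exact Or.inl (Or.inl (Or.inr h))
      · exact Or.inl (Or.inr (Or.inr h))
      · exact Or.inr ⟨x, hx, h.symm⟩
    have hnat1 : n ≤ (A ∪ B).card + ∑ x ∈ s, (univ.filter (fun y => θ y = θ x)).card := by
      calc n = (univ : Finset V).card := by rw [card_univ, hn]
        _ ≤ ((A ∪ B) ∪ s.biUnion (fun x => univ.filter (fun y => θ y = θ x))).card :=
          card_le_card hcover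
        _ ≤ (A ∪ B).card + (s.biUnion (fun x => univ.filter (fun y => θ y = θ x))).card :=
          card_union_le _ _
        _ ≤ (A ∪ B).card + ∑ x ∈ s, (univ.filter (fun y => θ y = θ x)).card := by
          exact Nat.add_le_add_left card_biUnion_le _
    have hnat2 : (A ∪ B).card + (A ∩ B).card = A.card + B.card :=
      card_union_add_card_inter _ _
    -- the disjoint pieces inside A ∩ B
    have hXYdisj : Disjoint
        ((univ.filter (fun x => φ x = φ u)) ∩ (univ.filter (fun x => θ x = θ v)))
        ((univ.filter (fun x => φ x = j0)) ∩ (univ.filter (fun x => θ x = θ u))) := by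
      rw [Finset.disjoint_left]
      intro x hxX hxY
      simp only [mem_inter, mem_filter, mem_univ, true_and] at hxX hxY
      exact hj0i (by rw [← hxY.1, hxX.1])
    have hXYsub : ((univ.filter (fun x => φ x = φ u)) ∩ (univ.filter (fun x => θ x = θ v))) ∪
        ((univ.filter (fun x => φ x = j0)) ∩ (univ.filter (fun x => θ x = θ u))) ⊆ A ∩ B := by
      rw [hA, hB]
      refine union_subset (subset_inter ?_ ?_) (subset_inter ?_ ?_)
      · exact inter_subset_left.trans subset_union_left
      · exact inter_subset_right.trans subset_union_right
      · exact inter_subset_right.trans subset_union_right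
      · exact inter_subset_left.trans subset_union_left
    have hDcard :
        ((univ.filter (fun x => φ x = φ u)) ∩ (univ.filter (fun x => θ x = θ v))).card
        + ((univ.filter (fun x => φ x = j0)) ∩ (univ.filter (fun x => θ x = θ u))).card
        ≤ (A ∩ B).card := by
      rw [← card_union_of_disjoint hXYdisj]
      exact card_le_card hXYsub
    -- master inequality, natural number version
    have hnat3 : n + (A ∩ B).card ≤ A.card + B.card
        + ∑ x ∈ s, (univ.filter (fun y => θ y = θ x)).card := by
      calc n + (A ∩ B).card
          ≤ ((A ∪ B).card + ∑ x ∈ s, (univ.filter (fun y => θ y = θ x)).card) + (A ∩ B).card :=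
            Nat.add_le_add_right hnat1 _
        _ = ((A ∪ B).card + (A ∩ B).card) + ∑ x ∈ s, (univ.filter (fun y => θ y = θ x)).card :=
            add_right_comm _ _ _
        _ = A.card + B.card + ∑ x ∈ s, (univ.filter (fun y => θ y = θ x)).card := by rw [hnat2]
    have hnat4 : n + (((univ.filter (fun x => φ x = φ u)) ∩ (univ.filter (fun x => θ x = θ v))).card
        + ((univ.filter (fun x => φ x = j0)) ∩ (univ.filter (fun x => θ x = θ u))).card)
        ≤ A.card + B.card + ∑ x ∈ s, (univ.filter (fun y => θ y = θ x)).card :=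
      le_trans (Nat.add_le_add_left hDcard n) hnat3
    -- to the reals
    have hnatR : (n:ℝ)
        + (((univ.filter (fun x => φ x = φ u)) ∩ (univ.filter (fun x => θ x = θ v))).card : ℝ)
        + (((univ.filter (fun x => φ x = j0)) ∩ (univ.filter (fun x => θ x = θ u))).card : ℝ)
        ≤ (A.card : ℝ) + (B.card : ℝ)
        + ∑ x ∈ s, ((univ.filter (fun y => θ y = θ x)).card : ℝ) := by
      have h2 : ((n + (((univ.filter (fun x => φ x = φ u)) ∩ (univ.filter (fun x => θ x = θ v))).card
          + ((univ.filter (fun x => φ x = j0)) ∩ (univ.filter (fun x => θ x = θ u))).card) : ℕ) : ℝ)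
          ≤ ((A.card + B.card + ∑ x ∈ s, (univ.filter (fun y => θ y = θ x)).card : ℕ) : ℝ) := by
        exact_mod_cast hnat4
      push_cast at h2
      linarith
    have hsumS : (∑ x ∈ s, ((univ.filter (fun y => θ y = θ x)).card : ℝ)) * (3*(k:ℝ)-2)
        ≤ ((k:ℝ)-2) * (3*n) := by
      have h := Finset.sum_le_card_nsmul s
        (fun x => ((univ.filter (fun y => θ y = θ x)).card : ℝ) * (3*(k:ℝ)-2)) (3*(n:ℝ))
        (fun x hx => hTs x hx)
      rw [nsmul_eq_mul, ← Finset.sum_mul, hs1] at h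
      have hc : (((k:ℕ)-2 : ℕ) : ℝ) = (k:ℝ) - 2 := by
        rw [Nat.cast_sub hk]
        norm_num
      rw [hc] at h
      exact h
    have hmul := mul_le_mul_of_nonneg_right hnatR (le_of_lt hK)
    nlinarith [hXa, hXb, hAR, hBR, hsumS, hmul, hn0, hK]
  -- assemble the permutation
  have hsurjφ := hsurj φ (fun x y h => (hedge x y h).2.1)
  have hsurjθ := hsurj θ (fun x y h => (hedge x y h).2.2)
  choose g hg using hsurjφ
  have hfsurj : Function.Surjective (fun j => θ (g j)) := by
    intro c
    obtain ⟨x, hx⟩ := hsurjθ c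
    refine ⟨φ x, ?_⟩
    show θ (g (φ x)) = c
    rw [hmain (g (φ x)) x (hg (φ x)), hx]
  have hfbij := Finite.surjective_iff_bijective.mp hfsurj
  refine ⟨Equiv.ofBijective _ hfbij, ?_⟩
  funext x
  simp only [Function.comp_apply, Equiv.ofBijective_apply]
  exact hmain (g (φ x)) x (hg (φ x))
end

section
/- Φ_{3,3,1} = 1/18; that is: (a) every n-vertex 3-partite 3-graph H (n ≥ 3) with no isolated vertices and with every vertex degree d_H(v) > n²/18 is uniquely 3-colorable, and (b) for every ε > 0 there exist arbitrarily large 3-partite 3-graphs without isolated vertices, on n vertices, with minimum vertex degree at least (1/18 - ε)n², that are not uniquely 3-colorable. -/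
/-!
Compare two proper 3-colourings `φ`, `θ` through the 3×3 matrix of class sizes
`M i j = #{x | φ x = i ∧ θ x = j}`. The other two vertices of an edge through a vertex of class
`(i, j)` lie in rows `i + 1`, `i + 2` and, in some order, columns `j + 1`, `j + 2`, so its degree
is at most the permanent of the 2×2 minor of `M` complementary to `(i, j)`. If all degrees exceed
`n² / 18`, every non-empty cell of `M` thus has a heavy complementary permanent, and a case analysis
with quadratic inequalities shows that no row of `M` has two non-empty cells. Exchanging `φ` and
`θ`, no column has either, so `θ = η ∘ φ` for a permutation `η`.

For sharpness, take `H_{3,3}(2, m)`: classes of sizes `2m, m, m, m, m` in the cells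
`(0,0), (1,1), (1,2), (2,1), (2,2)` and every triple proper for both colourings as an edge. Every
degree is exactly `2m² = n² / 18`, but `φ` does not determine `θ`.
-/

open Finset

theorem false_of_sq_lt_mul_of_four_sq_lt (n A d e i w : ℝ)
    (hA : 0 ≤ A) (hd : 0 ≤ d) (he : 0 ≤ e) (hi : 0 ≤ i) (hw : 0 ≤ w)
    (hsum : A + d + e + i + w = n) (heA : n ^ 2 < 18 * (e * A))
    (hdi : 4 * n ^ 2 < 18 * ((A + 2 * d) * i) + 9 * w ^ 2) : False := by
  have hn : 0 < n := by nlinarith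
  have h2 : 16 * n ^ 2 < 9 * (A + 2 * (d + i + w)) ^ 2 := by
    nlinarith [sq_nonneg (A + 2 * d - 2 * i),
      mul_nonneg hw (by positivity : (0:ℝ) ≤ A + 2 * d + 2 * i)]
  have key : 4 * n < 3 * (A + 2 * (d + i + w)) := by
    nlinarith [mul_pos hn hn, sq_nonneg (3 * (A + 2 * (d + i + w)) + 4 * n)]
  nlinarith [sq_nonneg (3 * A - 6 * e)]

theorem false_of_sq_lt_mul_of_two_sq_mul_lt (n r₁ r₂ r₃ q : ℝ)
    (h₁ : 0 < r₁) (hq : 0 < q) (hqr : q ≤ r₃) (hsum : r₁ + r₂ + r₃ = n)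
    (h : 2 * n ^ 2 * r₁ < n ^ 2 * (r₃ - 2 * q) + 18 * q * r₂ * r₁)
    (hq₁ : n ^ 2 < 18 * (r₁ * q)) (hr₁ : n ^ 2 < 18 * (r₁ * r₂)) : False := by
  nlinarith [mul_pos h₁ hq, mul_pos hq (mul_pos h₁ h₁), sq_nonneg (r₁ - q), sq_nonneg (r₂ - q),
    sq_nonneg (n - 3 * r₁), mul_pos h₁ h₁, sq_nonneg (r₁ + q - r₂),
    mul_nonneg (sub_nonneg.2 hqr) h₁.le]

theorem false_of_two_sq_lt_of_sq_lt_mul (n r₁ r₂ r₃ p q : ℝ)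
    (h₁ : 0 ≤ r₁) (h₂ : 0 ≤ r₂) (h₃ : 0 ≤ r₃) (hp : 0 ≤ p) (hq : 0 ≤ q)
    (hpr : p ≤ r₂) (hqr : q ≤ r₃) (hsum : r₁ + r₂ + r₃ = n)
    (hpq : 2 * n ^ 2 < 18 * ((r₃ - q) * p + (r₂ - p) * q))
    (hp₁ : n ^ 2 < 18 * (r₁ * p)) (hq₁ : n ^ 2 < 18 * (r₁ * q)) : False := by
  have hr₁ : 0 < r₁ := lt_of_le_of_ne h₁ fun h => by subst h; nlinarith
  have hp' : 0 < p := by nlinarith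
  have hq' : 0 < q := by nlinarith
  rcases le_or_gt (2 * q) r₃ with hq₃ | hq₃
  · rcases le_or_gt (2 * p) r₂ with hp₂ | hp₂
    · nlinarith [sq_nonneg (r₁ - r₂), sq_nonneg (r₁ - r₃), sq_nonneg (r₂ - r₃),
        mul_nonneg (sub_nonneg.2 hq₃) hr₁.le, mul_nonneg (sub_nonneg.2 hp₂) hr₁.le,
        mul_nonneg (sub_nonneg.2 hq₃) hp, mul_nonneg (sub_nonneg.2 hp₂) hq]
    · refine false_of_sq_lt_mul_of_two_sq_mul_lt n r₁ r₃ r₂ p hr₁ hp' hpr (by linarith)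
        ?_ hp₁ (by nlinarith [mul_nonneg (sub_nonneg.2 hqr) hr₁.le])
      nlinarith [mul_le_mul_of_nonpos_right hq₁.le (by linarith : r₂ - 2 * p ≤ 0)]
  · refine false_of_sq_lt_mul_of_two_sq_mul_lt n r₁ r₂ r₃ q hr₁ hq' hqr (by linarith)
      ?_ hq₁ (by nlinarith [mul_nonneg (sub_nonneg.2 hpr) hr₁.le])
    nlinarith [mul_le_mul_of_nonpos_right hp₁.le (by linarith : r₃ - 2 * q ≤ 0)]

/- Below, `a b c / d e f / g h i` are the cells of a 3×3 matrix with total `n`, and a hypothesis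
`n ^ 2 < 18 * (…)` attached to a cell says that its complementary 2×2 permanent is heavy. -/

theorem false_of_heavy_square_and_corner (n a b c d e f g h i : ℝ)
    (ha : 0 ≤ a) (hb : 0 ≤ b) (hc : 0 ≤ c) (hd : 0 ≤ d) (he : 0 ≤ e)
    (hf : 0 ≤ f) (hg : 0 ≤ g) (hh : 0 ≤ h) (hi : 0 ≤ i)
    (hsum : a + b + c + d + e + f + g + h + i = n)
    (Ha : n ^ 2 < 18 * (e * i + f * h)) (Hb : n ^ 2 < 18 * (d * i + f * g))
    (Hd : n ^ 2 < 18 * (b * i + c * h)) (He : n ^ 2 < 18 * (a * i + c * g))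
    (Hi : n ^ 2 < 18 * (a * e + b * d)) : False := by
  rcases le_total d e with hde | hed
  · refine false_of_sq_lt_mul_of_four_sq_lt n (a + b) d e i (c + f + (g + h)) (by linarith)
      hd he hi (by linarith) (by linarith) (by nlinarith [mul_nonneg hb (sub_nonneg.2 hde)]) ?_
    nlinarith [mul_nonneg hc hg, mul_nonneg hc hh, mul_nonneg hf hg, mul_nonneg hf hh,
      sq_nonneg (c + f - (g + h))]
  · refine false_of_sq_lt_mul_of_four_sq_lt n (a + b) e d i (c + f + (g + h)) (by linarith)
      he hd hi (by linarith) (by linarith) (by nlinarith [mul_nonneg ha (sub_nonneg.2 hed)]) ?_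
    nlinarith [mul_nonneg hc hg, mul_nonneg hc hh, mul_nonneg hf hg, mul_nonneg hf hh,
      sq_nonneg (c + f - (g + h))]

theorem false_of_heavy_pair_and_column (n a b c d e f g h i : ℝ)
    (ha : 0 ≤ a) (hb : 0 ≤ b) (hc : 0 ≤ c) (hd : 0 ≤ d) (he : 0 ≤ e)
    (hf : 0 ≤ f) (hg : 0 ≤ g) (hh : 0 ≤ h) (hi : 0 ≤ i)
    (hsum : a + b + c + d + e + f + g + h + i = n)
    (Ha : n ^ 2 < 18 * (e * i + f * h)) (Hb : n ^ 2 < 18 * (d * i + f * g))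
    (Hf : n ^ 2 < 18 * (a * h + b * g)) (Hi : n ^ 2 < 18 * (a * e + b * d)) : False := by
  refine false_of_two_sq_lt_of_sq_lt_mul n (a + b + c) (d + e + f) (g + h + i) (d + e) (g + h)
    (by linarith) (by linarith) (by linarith) (by linarith) (by linarith)
    (by linarith) (by linarith) (by linarith) (by nlinarith) ?_ ?_
  · nlinarith [mul_nonneg ha hd, mul_nonneg hb he, mul_nonneg hc hd, mul_nonneg hc he]
  · nlinarith [mul_nonneg ha hg, mul_nonneg hb hh, mul_nonneg hc hg, mul_nonneg hc hh]

theorem false_of_heavy_pair (n a b c d e f g h i : ℝ)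
    (ha : 0 ≤ a) (hb : 0 ≤ b) (hc : 0 ≤ c) (hd : 0 ≤ d) (he : 0 ≤ e)
    (hf : 0 ≤ f) (hg : 0 ≤ g) (hh : 0 ≤ h) (hi : 0 ≤ i)
    (hsum : a + b + c + d + e + f + g + h + i = n)
    (Ha : n ^ 2 < 18 * (e * i + f * h)) (Hb : n ^ 2 < 18 * (d * i + f * g))
    (Hd : 0 < d → n ^ 2 < 18 * (b * i + c * h)) (He : 0 < e → n ^ 2 < 18 * (a * i + c * g))
    (Hf : 0 < f → n ^ 2 < 18 * (a * h + b * g)) (Hg : 0 < g → n ^ 2 < 18 * (b * f + c * e))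
    (Hh : 0 < h → n ^ 2 < 18 * (a * f + c * d)) (Hi : 0 < i → n ^ 2 < 18 * (a * e + b * d)) :
    False := by
  rcases lt_or_ge 0 (e * i) with hei | hei
  · have hi' : 0 < i := pos_of_mul_pos_right hei he
    rcases hf.lt_or_eq with hf' | rfl
    · exact false_of_heavy_pair_and_column n a b c d e f g h i ha hb hc hd he hf hg hh hi hsum
        Ha Hb (Hf hf') (Hi hi')
    · have hd' : 0 < d := pos_of_mul_pos_left (by nlinarith) hi
      exact false_of_heavy_square_and_corner n a b c d e 0 g h i ha hb hc hd he hf hg hh hi hsum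
        Ha Hb (Hd hd') (He (pos_of_mul_pos_left hei hi)) (Hi hi')
  · have hfh : 0 < f * h := by nlinarith
    have hf' : 0 < f := pos_of_mul_pos_left hfh hh
    rcases hi.lt_or_eq with hi' | rfl
    · exact false_of_heavy_pair_and_column n a b c d e f g h i ha hb hc hd he hf hg hh hi hsum
        Ha Hb (Hf hf') (Hi hi')
    · have hg' : 0 < g := pos_of_mul_pos_right (by nlinarith) hf
      refine false_of_heavy_square_and_corner n a b c g h 0 d e f ha hb hc hg hh hi hd he hf
        (by linarith) (by linarith) (by linarith) (by linarith [Hg hg'])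
        (Hh (pos_of_mul_pos_right hfh hf)) (by linarith [Hf hf'])

def minorPerm {R : Type*} [CommSemiring R] (M : Fin 3 → Fin 3 → R) (i j : Fin 3) : R :=
  M (i + 1) (j + 1) * M (i + 2) (j + 2) + M (i + 1) (j + 2) * M (i + 2) (j + 1)

theorem minorPerm_mul_right {R : Type*} [CommSemiring R] (M : Fin 3 → Fin 3 → R) (c : R)
    (i j : Fin 3) : minorPerm (fun i j => M i j * c) i j = minorPerm M i j * c ^ 2 := by
  simp only [minorPerm]
  ring

structure IsHeavy (n : ℝ) (M : Fin 3 → Fin 3 → ℝ) : Prop where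
  nonneg : ∀ i j, 0 ≤ M i j
  sum_eq : ∑ i, ∑ j, M i j = n
  sq_lt : ∀ i j, 0 < M i j → n ^ 2 < 18 * minorPerm M i j

namespace IsHeavy

variable {n : ℝ} {M : Fin 3 → Fin 3 → ℝ}

theorem shift (h : IsHeavy n M) (r c : Fin 3) : IsHeavy n (fun i j => M (i + r) (j + c)) where
  nonneg i j := h.nonneg _ _
  sum_eq := h.sum_eq ▸ Fintype.sum_equiv (Equiv.addRight r) _ _ fun _ =>
    Fintype.sum_equiv (Equiv.addRight c) _ _ fun _ => rfl
  sq_lt i j hij := by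
    convert h.sq_lt _ _ hij using 2
    simp only [minorPerm, add_right_comm _ _ r, add_right_comm _ _ c]

theorem neg_col (h : IsHeavy n M) : IsHeavy n (fun i j => M i (-j)) where
  nonneg i j := h.nonneg _ _
  sum_eq := h.sum_eq ▸ Fintype.sum_congr _ _ fun _ =>
    Fintype.sum_equiv (Equiv.neg _) _ _ fun _ => rfl
  sq_lt i j hij := by
    have h₁ : ∀ x : Fin 3, -(x + 1) = -x + 2 := by decide
    have h₂ : ∀ x : Fin 3, -(x + 2) = -x + 1 := by decide
    convert h.sq_lt _ _ hij using 2
    simp only [minorPerm, h₁, h₂]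
    ring

theorem false_of_pos_zero_zero_of_pos_zero_one (h : IsHeavy n M) (h₀ : 0 < M 0 0)
    (h₁ : 0 < M 0 1) : False := by
  have hsum := h.sum_eq
  simp only [Fin.sum_univ_three] at hsum
  refine false_of_heavy_pair n (M 0 0) (M 0 1) (M 0 2) (M 1 0) (M 1 1) (M 1 2) (M 2 0) (M 2 1)
    (M 2 2) (h.nonneg 0 0) (h.nonneg 0 1) (h.nonneg 0 2) (h.nonneg 1 0) (h.nonneg 1 1)
    (h.nonneg 1 2) (h.nonneg 2 0) (h.nonneg 2 1) (h.nonneg 2 2) (by linarith)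
    ?_ ?_ (fun hp => ?_) (fun hp => ?_) (fun hp => ?_) (fun hp => ?_) (fun hp => ?_) (fun hp => ?_)
  on_goal 1 => have := h.sq_lt 0 0 h₀
  on_goal 2 => have := h.sq_lt 0 1 h₁
  all_goals first | have := h.sq_lt _ _ hp | skip
  all_goals simp only [minorPerm, Fin.reduceAdd, Fin.isValue] at this; linarith

theorem eq_of_pos_of_pos (h : IsHeavy n M) {r j j' : Fin 3} (hj : 0 < M r j)
    (hj' : 0 < M r j') : j = j' := by
  by_contra hne
  have hcases : ∀ a b : Fin 3, a ≠ b → b = a + 1 ∨ b = a + 2 := by decide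
  rcases hcases j j' hne with rfl | rfl
  · exact (h.shift r j).false_of_pos_zero_zero_of_pos_zero_one (by simpa using hj)
      (by simpa [add_comm] using hj')
  · exact (h.shift r j).neg_col.false_of_pos_zero_zero_of_pos_zero_one (by simpa using hj)
      (by simpa [add_comm, show (-1 : Fin 3) = 2 by decide] using hj')

end IsHeavy

theorem eq_add_one_and_eq_add_two_or {p q r : Fin 3} (hq : q ≠ p) (hr : r ≠ p) (hqr : q ≠ r) :
    (q = p + 1 ∧ r = p + 2) ∨ (q = p + 2 ∧ r = p + 1) := by
  revert p q r; decide

theorem Set.injOn_triple {α β : Type*} {f : α → β} {a b c : α} (hab : f a ≠ f b)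
    (hac : f a ≠ f c) (hbc : f b ≠ f c) : Set.InjOn f {a, b, c} := by
  rintro x (rfl | rfl | rfl) y (rfl | rfl | rfl) hxy <;> first | rfl | simp_all

theorem exists_erase_eq_pair {V : Type*} [DecidableEq V] {E : Finset V} {φ θ : V → Fin 3}
    (hE : E.card = 3) (hφ : Set.InjOn φ E) (hθ : Set.InjOn θ E) {v : V} (hv : v ∈ E) :
    ∃ y z, E.erase v = {y, z} ∧ φ y = φ v + 1 ∧ φ z = φ v + 2 ∧
      ((θ y = θ v + 1 ∧ θ z = θ v + 2) ∨ (θ y = θ v + 2 ∧ θ z = θ v + 1)) := by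
  obtain ⟨y, z, hyz, hErase⟩ :=
    card_eq_two.1 (by rw [card_erase_of_mem hv, hE] : (E.erase v).card = 2)
  have hy : y ∈ E.erase v := by simp [hErase]
  have hz : z ∈ E.erase v := by simp [hErase]
  have ne {f : V → Fin 3} (hf : Set.InjOn f E) {a b : V} (ha : a ∈ E) (hb : b ∈ E) (hab : a ≠ b) :
      f a ≠ f b := fun h => hab (hf ha hb h)
  rw [mem_erase] at hy hz
  rcases eq_add_one_and_eq_add_two_or (ne hφ hy.2 hv hy.1) (ne hφ hz.2 hv hz.1)
    (ne hφ hy.2 hz.2 hyz) with ⟨h₁, h₂⟩ | ⟨h₁, h₂⟩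
  · exact ⟨y, z, hErase, h₁, h₂, eq_add_one_and_eq_add_two_or (ne hθ hy.2 hv hy.1)
      (ne hθ hz.2 hv hz.1) (ne hθ hy.2 hz.2 hyz)⟩
  · exact ⟨z, y, hErase.trans (pair_comm y z), h₂, h₁, eq_add_one_and_eq_add_two_or
      (ne hθ hz.2 hv hz.1) (ne hθ hy.2 hv hy.1) (ne hθ hz.2 hy.2 hyz.symm)⟩

section Colorings

variable {V : Type*} [Fintype V]

def colorClass (φ θ : V → Fin 3) (i j : Fin 3) : Finset V := {x | φ x = i ∧ θ x = j}

def classCard (φ θ : V → Fin 3) (i j : Fin 3) : ℕ := #(colorClass φ θ i j)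

theorem sum_classCard (φ θ : V → Fin 3) : ∑ i, ∑ j, classCard φ θ i j = Fintype.card V := by
  rw [← Fintype.sum_prod_type', ← card_univ,
    card_eq_sum_card_fiberwise (f := fun x => (φ x, θ x)) (t := univ)
      fun _ _ => mem_coe.2 (mem_univ _)]
  refine Fintype.sum_congr _ _ fun p => ?_
  simp only [classCard, colorClass, Prod.ext_iff]

variable [DecidableEq V] {φ θ : V → Fin 3} (v : V)

def partnerPairs (φ θ : V → Fin 3) (v : V) : Finset (V × V) :=
  colorClass φ θ (φ v + 1) (θ v + 1) ×ˢ colorClass φ θ (φ v + 2) (θ v + 2) ∪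
    colorClass φ θ (φ v + 1) (θ v + 2) ×ˢ colorClass φ θ (φ v + 2) (θ v + 1)

theorem card_partnerPairs : #(partnerPairs φ θ v) = minorPerm (classCard φ θ) (φ v) (θ v) := by
  have hne : ∀ t : Fin 3, t + 1 ≠ t + 2 := by decide
  rw [partnerPairs, card_union_of_disjoint, card_product, card_product, minorPerm]
  · rfl
  · exact disjoint_left.2 fun p hp hp' => hne _ <| by
      simp only [colorClass, mem_product, mem_filter] at hp hp'
      rw [← hp.1.2.2, hp'.1.2.2]

variable {v} in
theorem colors_of_mem_partnerPairs {p : V × V} (hp : p ∈ partnerPairs φ θ v) :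
    φ p.1 = φ v + 1 ∧ φ p.2 = φ v + 2 ∧ θ p.1 ≠ θ v ∧ θ p.2 ≠ θ v ∧ θ p.1 ≠ θ p.2 := by
  have h : ∀ t : Fin 3, t + 1 ≠ t ∧ t + 2 ≠ t ∧ t + 1 ≠ t + 2 ∧ t + 2 ≠ t + 1 := by decide
  simp only [partnerPairs, colorClass, mem_union, mem_product, mem_filter, mem_univ,
    true_and] at hp
  rcases hp with ⟨⟨h₁, h₂⟩, h₃, h₄⟩ | ⟨⟨h₁, h₂⟩, h₃, h₄⟩ <;> simp [h₁, h₂, h₃, h₄, h]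

theorem card_filter_mem_le_minorPerm {H : Finset (Finset V)} (hcard : ∀ E ∈ H, E.card = 3)
    (hφ : ∀ E ∈ H, Set.InjOn φ E) (hθ : ∀ E ∈ H, Set.InjOn θ E) :
    #{E ∈ H | v ∈ E} ≤ minorPerm (classCard φ θ) (φ v) (θ v) := by
  rw [← card_partnerPairs]
  calc #{E ∈ H | v ∈ E}
      ≤ #((partnerPairs φ θ v).image fun p => {p.1, p.2}) := by
        refine card_le_card_of_injOn (·.erase v) (fun E hE => ?_)
          ((erase_injOn' v).mono fun E hE => (mem_filter.1 hE).2)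
        obtain ⟨hEH, hvE⟩ := mem_filter.1 hE
        obtain ⟨y, z, hErase, hy, hz, hyz⟩ :=
          exists_erase_eq_pair (hcard E hEH) (hφ E hEH) (hθ E hEH) hvE
        refine mem_image.2 ⟨(y, z), ?_, hErase.symm⟩
        rcases hyz with ⟨hy', hz'⟩ | ⟨hy', hz'⟩
        · exact mem_union_left _ (by simp [colorClass, hy, hz, hy', hz'])
        · exact mem_union_right _ (by simp [colorClass, hy, hz, hy', hz'])
    _ ≤ #(partnerPairs φ θ v) := card_image_le

theorem minorPerm_le_card_filter_mem {H : Finset (Finset V)}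
    (hH : ∀ E : Finset V, E.card = 3 → Set.InjOn φ E → Set.InjOn θ E → E ∈ H) :
    minorPerm (classCard φ θ) (φ v) (θ v) ≤ #{E ∈ H | v ∈ E} := by
  have hφ {p : V × V} (hp : p ∈ partnerPairs φ θ v) :
      φ v ≠ φ p.1 ∧ φ v ≠ φ p.2 ∧ φ p.1 ≠ φ p.2 := by
    obtain ⟨h₁, h₂, -⟩ := colors_of_mem_partnerPairs hp
    have h : ∀ t : Fin 3, t ≠ t + 1 ∧ t ≠ t + 2 ∧ t + 1 ≠ t + 2 := by decide
    rw [h₁, h₂]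
    exact h _
  rw [← card_partnerPairs]
  refine card_le_card_of_injOn (fun p => {v, p.1, p.2}) (fun p hp => ?_) fun p hp q hq hpq => ?_
  · obtain ⟨-, -, h₃, h₄, h₅⟩ := colors_of_mem_partnerPairs hp
    obtain ⟨h₀₁, h₀₂, h₁₂⟩ := hφ hp
    refine mem_filter.2 ⟨hH _ ?_ ?_ ?_, mem_insert_self _ _⟩
    · exact card_eq_three.2 ⟨v, p.1, p.2, ne_of_apply_ne φ h₀₁, ne_of_apply_ne φ h₀₂,
        ne_of_apply_ne φ h₁₂, rfl⟩
    · simpa using Set.injOn_triple h₀₁ h₀₂ h₁₂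
    · simpa using Set.injOn_triple (Ne.symm h₃) (Ne.symm h₄) h₅
  · obtain ⟨h₀₁, h₀₂, h₁₂⟩ := hφ hp
    have hinj : Set.InjOn φ ({v, p.1, p.2} : Finset V) := by
      simpa using Set.injOn_triple h₀₁ h₀₂ h₁₂
    have hpq : ({v, p.1, p.2} : Finset V) = {v, q.1, q.2} := hpq
    obtain ⟨hp₁, hp₂, -⟩ := colors_of_mem_partnerPairs hp
    obtain ⟨hq₁, hq₂, -⟩ := colors_of_mem_partnerPairs hq
    have hq₁S : q.1 ∈ ({v, p.1, p.2} : Finset V) := by rw [hpq]; simp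
    have hq₂S : q.2 ∈ ({v, p.1, p.2} : Finset V) := by rw [hpq]; simp
    exact Prod.ext (hinj (by simp) hq₁S (hp₁.trans hq₁.symm))
      (hinj (by simp) hq₂S (hp₂.trans hq₂.symm))

end Colorings

theorem exists_perm_comp_eq_of_surjective {α β : Type*} [Finite β] {φ θ : α → β}
    (hφ : Function.Surjective φ) (h : ∀ u w, φ u = φ w ↔ θ u = θ w) :
    ∃ η : Equiv.Perm β, η ∘ φ = θ := by
  refine ⟨Equiv.ofBijective (θ ∘ Function.surjInv hφ)
    (Finite.injective_iff_bijective.1 fun a b hab => ?_), ?_⟩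
  · simpa [Function.surjInv_eq] using (h _ _).2 hab
  · exact funext fun v => (h _ _).1 (Function.surjInv_eq hφ (φ v))

theorem surjective_of_injOn_of_card_eq {α β : Type*} [Fintype β] {E : Finset α} {f : α → β}
    (hE : E.card = Fintype.card β) (hf : Set.InjOn f E) : Function.Surjective f := by
  classical
  have himage : E.image f = univ := eq_univ_of_card _ (by rw [card_image_of_injOn hf, hE])
  intro b
  obtain ⟨a, -, ha⟩ := mem_image.1 (himage ▸ mem_univ b)
  exact ⟨a, ha⟩

section UniqueColorability

variable {V : Type*} [Fintype V] [DecidableEq V] {H : Finset (Finset V)} {φ θ : V → Fin 3}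

theorem isHeavy_classCard (hcard : ∀ E ∈ H, E.card = 3) (hφ : ∀ E ∈ H, Set.InjOn φ E)
    (hθ : ∀ E ∈ H, Set.InjOn θ E)
    (hdeg : ∀ x, (Fintype.card V : ℝ) ^ 2 / 18 < #{E ∈ H | x ∈ E}) :
    IsHeavy (Fintype.card V) fun i j => (classCard φ θ i j : ℝ) where
  nonneg _ _ := Nat.cast_nonneg _
  sum_eq := by exact_mod_cast sum_classCard φ θ
  sq_lt i j hij := by
    obtain ⟨v, hv⟩ := card_pos.1 (Nat.cast_pos.1 hij)
    obtain ⟨rfl, rfl⟩ := (mem_filter.1 hv).2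
    have hle : (#{E ∈ H | v ∈ E} : ℝ) ≤
        minorPerm (fun i j => (classCard φ θ i j : ℝ)) (φ v) (θ v) := by
      have := card_filter_mem_le_minorPerm v hcard hφ hθ
      simp only [minorPerm] at this ⊢
      exact_mod_cast this
    linarith [hdeg v]

theorem eq_of_eq_of_forall_degree_gt (hcard : ∀ E ∈ H, E.card = 3)
    (hφ : ∀ E ∈ H, Set.InjOn φ E) (hθ : ∀ E ∈ H, Set.InjOn θ E)
    (hdeg : ∀ x, (Fintype.card V : ℝ) ^ 2 / 18 < #{E ∈ H | x ∈ E}) {u w : V}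
    (huw : φ u = φ w) : θ u = θ w := by
  have hpos (x : V) : (0 : ℝ) < classCard φ θ (φ x) (θ x) :=
    Nat.cast_pos.2 (card_pos.2 ⟨x, by simp [colorClass]⟩)
  exact (isHeavy_classCard hcard hφ hθ hdeg).eq_of_pos_of_pos (hpos u) (huw ▸ hpos w)

theorem exists_perm_comp_eq_of_forall_degree_gt (hcard : ∀ E ∈ H, E.card = 3)
    (hφ : ∀ E ∈ H, Set.InjOn φ E) (hθ : ∀ E ∈ H, Set.InjOn θ E) (hH : H.Nonempty)
    (hdeg : ∀ x, (Fintype.card V : ℝ) ^ 2 / 18 < #{E ∈ H | x ∈ E}) :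
    ∃ η : Equiv.Perm (Fin 3), η ∘ φ = θ := by
  obtain ⟨E, hE⟩ := hH
  have hφsurj := surjective_of_injOn_of_card_eq ((hcard E hE).trans (Fintype.card_fin 3).symm)
    (hφ E hE)
  exact exists_perm_comp_eq_of_surjective hφsurj fun u w => ⟨eq_of_eq_of_forall_degree_gt hcard hφ hθ hdeg,
      eq_of_eq_of_forall_degree_gt hcard hθ hφ hdeg⟩

end UniqueColorability

open Classical in
noncomputable def properTriples {V : Type*} [Fintype V] (φ θ : V → Fin 3) : Finset (Finset V) :=
  {E | E.card = 3 ∧ Set.InjOn φ E ∧ Set.InjOn θ E}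

theorem mem_properTriples {V : Type*} [Fintype V] {φ θ : V → Fin 3} {E : Finset V} :
    E ∈ properTriples φ θ ↔ E.card = 3 ∧ Set.InjOn φ E ∧ Set.InjOn θ E := by
  simp [properTriples]

section Construction

def blockCell : Fin 6 → Fin 3 × Fin 3 := ![(0, 0), (0, 0), (1, 1), (1, 2), (2, 1), (2, 2)]

/-- `finProdFinEquiv.symm x = (x / m, x % m)`: the vertex `x` lies in block `x / m` of size `m`. -/
def blockColoring (m : ℕ) (x : Fin (6 * m)) : Fin 3 × Fin 3 :=
  blockCell (finProdFinEquiv.symm x).1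

variable (m : ℕ)

@[simp]
theorem blockColoring_finProdFinEquiv (k : Fin 6) (t : Fin m) :
    blockColoring m (finProdFinEquiv (k, t)) = blockCell k := by
  simp [blockColoring]

theorem classCard_blockColoring (i j : Fin 3) :
    classCard (blockColoring m · |>.1) (blockColoring m · |>.2) i j =
      #{k | blockCell k = (i, j)} * m := by
  rw [classCard, colorClass, card_equiv finProdFinEquiv.symm
    (t := {p : Fin 6 × Fin m | blockCell p.1 = (i, j)}) (by simp [blockColoring, Prod.ext_iff]),
    ← univ_product_univ]
  convert congrArg card (filter_product_left (s := univ) (t := (univ : Finset (Fin m)))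
    fun k => blockCell k = (i, j)) using 1
  rw [card_product, card_fin]

theorem minorPerm_classCard_blockColoring (x : Fin (6 * m)) :
    minorPerm (classCard (blockColoring m · |>.1) (blockColoring m · |>.2))
      (blockColoring m x).1 (blockColoring m x).2 = 2 * m ^ 2 := by
  have hcell : ∀ k : Fin 6,
      minorPerm (fun i j => #{k | blockCell k = (i, j)}) (blockCell k).1 (blockCell k).2 = 2 := by
    decide
  rw [funext₂ (classCard_blockColoring m), minorPerm_mul_right, blockColoring, hcell]

theorem two_mul_sq_le_card_filter_mem (x : Fin (6 * m)) :
    2 * m ^ 2 ≤ #{E ∈ properTriples (blockColoring m · |>.1) (blockColoring m · |>.2) | x ∈ E} :=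
  minorPerm_classCard_blockColoring m x ▸
    minorPerm_le_card_filter_mem x fun _ h₁ h₂ h₃ => mem_properTriples.2 ⟨h₁, h₂, h₃⟩

end Construction

theorem not_exists_perm_comp_eq {α β : Type*} {φ θ : α → β} {u w : α} (hφ : φ u = φ w)
    (hθ : θ u ≠ θ w) : ¬∃ η : Equiv.Perm β, η ∘ φ = θ := by
  rintro ⟨η, rfl⟩
  exact hθ (congrArg η hφ)

/-- Φ_{3,3,1} = 1/18: (a) every n-vertex (n ≥ 3) 3-partite 3-graph with no isolated
vertices and all vertex degrees > n²/18 is uniquely 3-colorable; (b) for every ε > 0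
there are arbitrarily large 3-partite 3-graphs with no isolated vertices, all vertex
degrees ≥ (1/18 - ε)·n², that are not uniquely 3-colorable. -/
theorem stmt14 :
    (∀ n : ℕ, 3 ≤ n → ∀ H : Finset (Finset (Fin n)),
      (∀ E ∈ H, E.card = 3) →
      (∃ φ : Fin n → Fin 3, ∀ E ∈ H, Set.InjOn φ ↑E) →
      (∀ x : Fin n, ∃ E ∈ H, x ∈ E) →
      (∀ x : Fin n, (n : ℝ) ^ 2 / 18 < ((H.filter (fun E => x ∈ E)).card : ℝ)) →
      ∀ φ θ : Fin n → Fin 3, (∀ E ∈ H, Set.InjOn φ ↑E) → (∀ E ∈ H, Set.InjOn θ ↑E) →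
        ∃ η : Equiv.Perm (Fin 3), η ∘ φ = θ) ∧
    (∀ ε : ℝ, 0 < ε → ∀ N : ℕ, ∃ n : ℕ, N ≤ n ∧ ∃ H : Finset (Finset (Fin n)),
      (∀ E ∈ H, E.card = 3) ∧
      (∃ φ : Fin n → Fin 3, ∀ E ∈ H, Set.InjOn φ ↑E) ∧
      (∀ x : Fin n, ∃ E ∈ H, x ∈ E) ∧
      (∀ x : Fin n, (1 / 18 - ε) * (n : ℝ) ^ 2 ≤ ((H.filter (fun E => x ∈ E)).card : ℝ)) ∧
      ∃ φ θ : Fin n → Fin 3, (∀ E ∈ H, Set.InjOn φ ↑E) ∧ (∀ E ∈ H, Set.InjOn θ ↑E) ∧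
        ¬ ∃ η : Equiv.Perm (Fin 3), η ∘ φ = θ) := by
  refine ⟨fun n hn H hcard _ hcover hdeg φ θ hφ hθ => ?_, fun ε hε N => ?_⟩
  · obtain ⟨E, hE, -⟩ := hcover ⟨0, by omega⟩
    exact exists_perm_comp_eq_of_forall_degree_gt hcard hφ hθ ⟨E, hE⟩
      fun x => by rw [Fintype.card_fin]; exact hdeg x
  · set m := max N 1
    have hm : 0 < m := by omega
    set φ := (blockColoring m · |>.1)
    set θ := (blockColoring m · |>.2)
    have hdeg (x : Fin (6 * m)) := two_mul_sq_le_card_filter_mem m x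
    refine ⟨6 * m, by omega, properTriples φ θ, fun E hE => (mem_properTriples.1 hE).1,
      ⟨φ, fun E hE => (mem_properTriples.1 hE).2.1⟩, fun x => ?_, fun x => ?_, φ, θ,
      fun E hE => (mem_properTriples.1 hE).2.1, fun E hE => (mem_properTriples.1 hE).2.2,
      not_exists_perm_comp_eq (u := finProdFinEquiv (2, ⟨0, hm⟩))
        (w := finProdFinEquiv (3, ⟨0, hm⟩)) ?_ ?_⟩
    · obtain ⟨E, hE⟩ := card_pos.1 ((by positivity : 0 < 2 * m ^ 2).trans_le (hdeg x))
      exact ⟨E, (mem_filter.1 hE).1, (mem_filter.1 hE).2⟩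
    · have : (2 * m ^ 2 : ℝ) ≤ #{E ∈ properTriples φ θ | x ∈ E} := by exact_mod_cast hdeg x
      push_cast
      nlinarith [mul_nonneg hε.le (sq_nonneg (m : ℝ))]
    · simp [φ, blockCell]
    · simp [θ, blockCell]
end

section
/- Let H be an n-vertex 3-partite 3-graph with parts V_1, V_2, V_3 where |V_1| ≥ |V_2| ≥ |V_3|, and suppose every vertex degree exceeds n²/18. Then for every pair of distinct vertices v_1, v_2 ∈ V_1, there exist u ∈ V_2 and w ∈ V_3 such that both {v_1, u, w} and {v_2, u, w} are edges of H. -/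
/-- In a 3-partite 3-graph with parts V₁ ⊇-largest, every vertex degree > n²/18 forces:
any two vertices of V₁ have a common pair of neighbours u ∈ V₂, w ∈ V₃. -/
theorem stmt15 {V : Type*} [Fintype V] [DecidableEq V]
    (n : ℕ) (hn : Fintype.card V = n)
    (H : Finset (Finset V))
    (V₁ V₂ V₃ : Finset V)
    (hdisj₁₂ : Disjoint V₁ V₂) (hdisj₁₃ : Disjoint V₁ V₃) (hdisj₂₃ : Disjoint V₂ V₃)
    (hcover : V₁ ∪ V₂ ∪ V₃ = Finset.univ)
    (hpart : ∀ E ∈ H, E.card = 3 ∧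
      (E ∩ V₁).card ≤ 1 ∧ (E ∩ V₂).card ≤ 1 ∧ (E ∩ V₃).card ≤ 1)
    (hsize : V₂.card ≤ V₁.card ∧ V₃.card ≤ V₂.card)
    (hdeg : ∀ x : V, (n : ℝ) ^ 2 / 18 < ((H.filter (fun E => x ∈ E)).card : ℝ)) :
    ∀ v₁ ∈ V₁, ∀ v₂ ∈ V₁, v₁ ≠ v₂ →
      ∃ u ∈ V₂, ∃ w ∈ V₃, ({v₁, u, w} : Finset V) ∈ H ∧ ({v₂, u, w} : Finset V) ∈ H := by
  classical
  intro v₁ hv₁ v₂ hv₂ hne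
  -- structure lemma: any edge through v ∈ V₁ is {v,u,w} with u ∈ V₂, w ∈ V₃
  have struct : ∀ v ∈ V₁, ∀ E ∈ H, v ∈ E →
      ∃ u ∈ V₂, ∃ w ∈ V₃, E.erase v = {u, w} := by
    intro v hv E hE hvE
    obtain ⟨hc3, h1, h2, h3⟩ := hpart E hE
    have hsub : E.erase v ⊆ V₂ ∪ V₃ := by
      intro x hx
      have hxE := Finset.mem_of_mem_erase hx
      have hxv := Finset.ne_of_mem_erase hx
      have hxV : x ∈ V₁ ∪ V₂ ∪ V₃ := by rw [hcover]; exact Finset.mem_univ x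
      rcases Finset.mem_union.1 hxV with h | h
      · rcases Finset.mem_union.1 h with h | h
        · exact absurd (Finset.card_le_one.1 h1 x (Finset.mem_inter.2 ⟨hxE, h⟩)
            v (Finset.mem_inter.2 ⟨hvE, hv⟩)) hxv
        · exact Finset.mem_union_left _ h
      · exact Finset.mem_union_right _ h
    have hc2 : (E.erase v).card = 2 := by
      rw [Finset.card_erase_of_mem hvE, hc3]
    have hdisj' : Disjoint (E.erase v ∩ V₂) (E.erase v ∩ V₃) :=
      hdisj₂₃.mono (Finset.inter_subset_right) (Finset.inter_subset_right)
    have hunion : (E.erase v ∩ V₂) ∪ (E.erase v ∩ V₃) = E.erase v := by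
      rw [← Finset.inter_union_distrib_left, Finset.inter_eq_left.2 hsub]
    have hsum : (E.erase v ∩ V₂).card + (E.erase v ∩ V₃).card = 2 := by
      rw [← Finset.card_union_of_disjoint hdisj', hunion, hc2]
    have hle2 : (E.erase v ∩ V₂).card ≤ 1 :=
      le_trans (Finset.card_le_card (by
        exact Finset.inter_subset_inter (Finset.erase_subset _ _) le_rfl)) h2
    have hle3 : (E.erase v ∩ V₃).card ≤ 1 :=
      le_trans (Finset.card_le_card (by
        exact Finset.inter_subset_inter (Finset.erase_subset _ _) le_rfl)) h3
    have hc₂ : (E.erase v ∩ V₂).card = 1 := by omega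
    have hc₃ : (E.erase v ∩ V₃).card = 1 := by omega
    obtain ⟨u, hu⟩ := Finset.card_eq_one.1 hc₂
    obtain ⟨w, hw⟩ := Finset.card_eq_one.1 hc₃
    have huV : u ∈ V₂ := (Finset.mem_inter.1 (hu ▸ Finset.mem_singleton_self u)).2
    have hwV : w ∈ V₃ := (Finset.mem_inter.1 (hw ▸ Finset.mem_singleton_self w)).2
    refine ⟨u, huV, w, hwV, ?_⟩
    rw [← hunion, hu, hw]
    ext x; simp [Finset.mem_insert, or_comm]
  set S₁ := H.filter (fun E => v₁ ∈ E) with hS₁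
  set S₂ := H.filter (fun E => v₂ ∈ E) with hS₂
  set A₁ := S₁.image (fun E => E.erase v₁) with hA₁
  set A₂ := S₂.image (fun E => E.erase v₂) with hA₂
  set P := (V₂ ×ˢ V₃).image (fun p => ({p.1, p.2} : Finset V)) with hP
  have hsubP : ∀ v ∈ V₁, ∀ A, A = (H.filter (fun E => v ∈ E)).image (fun E => E.erase v) →
      A ⊆ P := by
    intro v hv A hA
    intro p hp
    rw [hA] at hp
    obtain ⟨E, hE, rfl⟩ := Finset.mem_image.1 hp
    obtain ⟨hEH, hvE⟩ := Finset.mem_filter.1 hE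
    obtain ⟨u, hu, w, hw, heq⟩ := struct v hv E hEH hvE
    rw [heq]
    exact Finset.mem_image.2 ⟨(u, w), Finset.mem_product.2 ⟨hu, hw⟩, rfl⟩
  have hinj : ∀ v : V, Set.InjOn (fun E : Finset V => E.erase v) ↑(H.filter (fun E => v ∈ E)) := by
    intro v E₁ hE₁ E₂ hE₂ h
    have h₁ := (Finset.mem_filter.1 hE₁).2
    have h₂ := (Finset.mem_filter.1 hE₂).2
    rw [← Finset.insert_erase h₁, ← Finset.insert_erase h₂]
    simp only at h
    rw [h]
  have hcard₁ : A₁.card = S₁.card := Finset.card_image_of_injOn (hinj v₁)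
  have hcard₂ : A₂.card = S₂.card := Finset.card_image_of_injOn (hinj v₂)
  have hPcard : P.card ≤ V₂.card * V₃.card := by
    calc P.card ≤ (V₂ ×ˢ V₃).card := Finset.card_image_le
    _ = V₂.card * V₃.card := Finset.card_product _ _
  -- total count
  have hntot : V₁.card + V₂.card + V₃.card = n := by
    have h12 : (V₁ ∪ V₂).card = V₁.card + V₂.card := Finset.card_union_of_disjoint hdisj₁₂
    have hd : Disjoint (V₁ ∪ V₂) V₃ := Finset.disjoint_union_left.2 ⟨hdisj₁₃, hdisj₂₃⟩
    have := Finset.card_union_of_disjoint hd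
    rw [hcover, Finset.card_univ, hn, h12] at this
    omega
  have hbc : 9 * (V₂.card * V₃.card) ≤ n ^ 2 := by
    have h1 := hsize.1
    have h2 := hsize.2
    nlinarith [sq_nonneg (V₂.card - V₃.card : ℤ), sq_nonneg (V₂.card + V₃.card : ℤ)]
  -- pigeonhole
  have hmeet : (A₁ ∩ A₂).Nonempty := by
    by_contra hcon
    rw [Finset.not_nonempty_iff_eq_empty] at hcon
    have hd : Disjoint A₁ A₂ := Finset.disjoint_iff_inter_eq_empty.2 hcon
    have hle : A₁.card + A₂.card ≤ P.card := by
      rw [← Finset.card_union_of_disjoint hd]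
      exact Finset.card_le_card (Finset.union_subset (hsubP v₁ hv₁ A₁ hA₁) (hsubP v₂ hv₂ A₂ hA₂))
    have hd₁ := hdeg v₁
    have hd₂ := hdeg v₂
    rw [← hS₁] at hd₁
    rw [← hS₂] at hd₂
    have hR : ((A₁.card : ℝ) + A₂.card) ≤ P.card := by exact_mod_cast hle
    have hR2 : ((P.card : ℝ)) ≤ V₂.card * V₃.card := by exact_mod_cast hPcard
    have hR3 : (9 : ℝ) * (V₂.card * V₃.card) ≤ (n : ℝ) ^ 2 := by exact_mod_cast hbc
    rw [hcard₁, hcard₂] at hR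
    nlinarith
  obtain ⟨p, hp⟩ := hmeet
  obtain ⟨hp₁, hp₂⟩ := Finset.mem_inter.1 hp
  obtain ⟨E₁, hE₁, hpe₁⟩ := Finset.mem_image.1 hp₁
  obtain ⟨E₂, hE₂, hpe₂⟩ := Finset.mem_image.1 hp₂
  obtain ⟨hE₁H, hv₁E⟩ := Finset.mem_filter.1 hE₁
  obtain ⟨hE₂H, hv₂E⟩ := Finset.mem_filter.1 hE₂
  obtain ⟨u, hu, w, hw, heq⟩ := struct v₁ hv₁ E₁ hE₁H hv₁E
  refine ⟨u, hu, w, hw, ?_, ?_⟩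
  · have : ({v₁, u, w} : Finset V) = E₁ := by
      rw [show ({v₁, u, w} : Finset V) = insert v₁ {u, w} from rfl, ← heq,
        Finset.insert_erase hv₁E]
    rwa [this]
  · have : ({v₂, u, w} : Finset V) = E₂ := by
      have hpq : E₂.erase v₂ = ({u, w} : Finset V) := by
        rw [hpe₂, ← hpe₁, heq]
      rw [show ({v₂, u, w} : Finset V) = insert v₂ {u, w} from rfl, ← hpq,
        Finset.insert_erase hv₂E]
    rwa [this]
end

section
/- Let n ≥ k ≥ r ≥ 2 and let H be an n-vertex r-graph admitting homomorphisms φ to K_k^r with δ⁺_{r-1}(H) > max{((3k-3r+1)/(3k-2))·n, ((k-r+1)/(k+2))·n}. Suppose every color class of φ is small, i.e. |φ⁻¹(j)| < 3n/(3k-2) for all j ∈ [k]. Then for every vertex v and every (r-1)-subset I ⊆ [k], there exists an edge e ∈ H containing v with I ⊆ φ(e). -/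
/-- Proposition 2.4(iv): if every color class of φ is small, then every vertex lies in an
edge whose colors contain any prescribed (r-1)-set of colors. -/
theorem stmt18 {V : Type*} [Fintype V] [DecidableEq V]
    (n k r : ℕ) (hn : Fintype.card V = n) (hr : 2 ≤ r) (hrk : r ≤ k) (hkn : k ≤ n)
    (H : Finset (Finset V)) (hcard : ∀ E ∈ H, E.card = r)
    (hiso : ∀ x : V, ∃ E ∈ H, x ∈ E)
    (φ : V → Fin k) (hhom : ∀ E ∈ H, Set.InjOn φ ↑E)
    (hdeg : ∀ e : Finset V, e.card = r - 1 → (∃ E ∈ H, e ⊆ E) →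
      max ((3 * (k : ℝ) - 3 * r + 1) / (3 * (k : ℝ) - 2) * n)
          (((k : ℝ) - r + 1) / ((k : ℝ) + 2) * n) <
        ((Finset.univ.filter (fun v => insert v e ∈ H)).card : ℝ))
    (hsmall : ∀ j : Fin k, ((Finset.univ.filter (fun v => φ v = j)).card : ℝ) <
      3 * (n : ℝ) / (3 * (k : ℝ) - 2)) :
    ∀ v : V, ∀ I : Finset (Fin k), I.card = r - 1 →
      ∃ e ∈ H, v ∈ e ∧ I ⊆ e.image φ := by
  intro v I hI
  have hn0 : 0 < n := lt_of_lt_of_le (by omega) hkn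
  have hnR : (0 : ℝ) < (n : ℝ) := by exact_mod_cast hn0
  have hk2 : (2 : ℕ) ≤ k := le_trans hr hrk
  have hkR : (2 : ℝ) ≤ (k : ℝ) := by exact_mod_cast hk2
  have hD : (0 : ℝ) < 3 * (k : ℝ) - 2 := by linarith
  -- key swap step: replace a vertex u of an edge E by a vertex of color j
  have key : ∀ E ∈ H, ∀ u ∈ E, ∀ j : Fin k, j ∉ (E.erase u).image φ →
      ∃ w : V, insert w (E.erase u) ∈ H ∧ φ w = j := by
    intro E hE u huE j hj
    set e := E.erase u with he
    have heE : e ⊆ E := Finset.erase_subset u E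
    have hecard : e.card = r - 1 := by
      rw [he, Finset.card_erase_of_mem huE, hcard E hE]
    have hinj : Set.InjOn φ ↑e := (hhom E hE).mono (by exact_mod_cast heE)
    have himcard : (e.image φ).card = r - 1 := by
      rw [Finset.card_image_of_injOn hinj, hecard]
    have hshadow : ∃ E' ∈ H, e ⊆ E' := ⟨E, hE, heE⟩
    by_contra hno
    push_neg at hno
    set N := Finset.univ.filter (fun w => insert w e ∈ H) with hN
    set T : Finset (Fin k) := insert j (e.image φ) with hT
    have hTcard : T.card = r := by
      rw [hT, Finset.card_insert_of_notMem hj, himcard]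
      omega
    -- every vertex of N has a color outside T
    have hNsub : N ⊆ Tᶜ.biUnion (fun c => Finset.univ.filter (fun w => φ w = c)) := by
      intro w hw
      have hwH : insert w e ∈ H := (Finset.mem_filter.mp hw).2
      have hwe : w ∉ e := by
        intro hwe
        have : (insert w e).card = r := hcard _ hwH
        rw [Finset.insert_eq_self.mpr hwe] at this
        omega
      have hφw : φ w ∉ T := by
        rw [hT, Finset.mem_insert]
        rintro (h | h)
        · exact hno w hwH h
        · obtain ⟨x, hx, hxw⟩ := Finset.mem_image.mp h
          have := hhom _ hwH (Finset.mem_insert_of_mem hx) (Finset.mem_insert_self w e) hxw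
          exact hwe (this ▸ hx)
      exact Finset.mem_biUnion.mpr ⟨φ w, Finset.mem_compl.mpr hφw,
        Finset.mem_filter.mpr ⟨Finset.mem_univ w, rfl⟩⟩
    have hTccard : Tᶜ.card = k - r := by
      rw [Finset.card_compl, hTcard, Fintype.card_fin]
    -- count
    have hcount : (N.card : ℝ) ≤ ((k : ℝ) - r) * (3 * (n : ℝ) / (3 * (k : ℝ) - 2)) := by
      have h1 : N.card ≤ (Tᶜ.biUnion (fun c => Finset.univ.filter (fun w => φ w = c))).card :=
        Finset.card_le_card hNsub
      have h2 : (Tᶜ.biUnion (fun c => Finset.univ.filter (fun w => φ w = c))).card ≤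
          ∑ c ∈ Tᶜ, (Finset.univ.filter (fun w => φ w = c)).card :=
        Finset.card_biUnion_le
      have h3 : (∑ c ∈ Tᶜ, ((Finset.univ.filter (fun w => φ w = c)).card : ℝ)) ≤
          Tᶜ.card • (3 * (n : ℝ) / (3 * (k : ℝ) - 2)) :=
        Finset.sum_le_card_nsmul _ _ _ (fun c _ => (hsmall c).le)
      have h4 : ((Tᶜ.card : ℕ) : ℝ) = (k : ℝ) - r := by
        rw [hTccard, Nat.cast_sub hrk]
      calc (N.card : ℝ) ≤ ∑ c ∈ Tᶜ, ((Finset.univ.filter (fun w => φ w = c)).card : ℝ) := by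
            exact_mod_cast le_trans h1 h2
        _ ≤ Tᶜ.card • (3 * (n : ℝ) / (3 * (k : ℝ) - 2)) := h3
        _ = ((k : ℝ) - r) * (3 * (n : ℝ) / (3 * (k : ℝ) - 2)) := by
            rw [nsmul_eq_mul, h4]
    have hlow : (3 * (k : ℝ) - 3 * r + 1) / (3 * (k : ℝ) - 2) * n < (N.card : ℝ) :=
      lt_of_le_of_lt (le_max_left _ _) (hdeg e hecard hshadow)
    have : (3 * (k : ℝ) - 3 * r + 1) / (3 * (k : ℝ) - 2) * n <
        ((k : ℝ) - r) * (3 * (n : ℝ) / (3 * (k : ℝ) - 2)) := lt_of_lt_of_le hlow hcount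
    have h1 : (3 * (k : ℝ) - 3 * r + 1) / (3 * (k : ℝ) - 2) * n
        = (3 * (k : ℝ) - 3 * r + 1) * n / (3 * (k : ℝ) - 2) := by ring
    have h2 : ((k : ℝ) - r) * (3 * (n : ℝ) / (3 * (k : ℝ) - 2))
        = ((k : ℝ) - r) * (3 * n) / (3 * (k : ℝ) - 2) := by ring
    rw [h1, h2, div_lt_div_iff_of_pos_right hD] at this
    nlinarith
  -- main induction on the number of missing colors
  obtain ⟨E0, hE0, hvE0⟩ := hiso v
  suffices h : ∀ d : ℕ, ∀ E ∈ H, v ∈ E → (I \ E.image φ).card ≤ d →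
      ∃ e ∈ H, v ∈ e ∧ I ⊆ e.image φ by
    exact h (I \ E0.image φ).card E0 hE0 hvE0 le_rfl
  intro d
  induction d with
  | zero =>
    intro E hE hvE h0
    refine ⟨E, hE, hvE, ?_⟩
    rw [Nat.le_zero, Finset.card_eq_zero, Finset.sdiff_eq_empty_iff_subset] at h0
    exact h0
  | succ d ih =>
    intro E hE hvE hle
    by_cases hsub : I ⊆ E.image φ
    · exact ⟨E, hE, hvE, hsub⟩
    · obtain ⟨j, hjI, hjE⟩ := Finset.not_subset.mp hsub
      -- find u ∈ E, u ≠ v, φ u ∉ I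
      have hu : ∃ u ∈ E, u ≠ v ∧ φ u ∉ I := by
        by_contra h
        push_neg at h
        have hEv : (E.erase v).image φ ⊆ I := by
          intro c hc
          obtain ⟨x, hx, hxc⟩ := Finset.mem_image.mp hc
          exact hxc ▸ h x (Finset.mem_of_mem_erase hx) (Finset.ne_of_mem_erase hx)
        have hcardEv : ((E.erase v).image φ).card = r - 1 := by
          rw [Finset.card_image_of_injOn
            ((hhom E hE).mono (by exact_mod_cast Finset.erase_subset v E)),
            Finset.card_erase_of_mem hvE, hcard E hE]
        have : (E.erase v).image φ = I :=
          Finset.eq_of_subset_of_card_le hEv (by rw [hcardEv, hI])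
        exact hsub (this ▸ Finset.image_subset_image (Finset.erase_subset v E))
      obtain ⟨u, huE, huv, huI⟩ := hu
      have hjEu : j ∉ (E.erase u).image φ :=
        fun h => hjE (Finset.image_subset_image (Finset.erase_subset u E) h)
      obtain ⟨w, hwH, hwj⟩ := key E hE u huE j hjEu
      have hvE' : v ∈ insert w (E.erase u) :=
        Finset.mem_insert_of_mem (Finset.mem_erase.mpr ⟨fun h => huv h.symm, hvE⟩)
      refine ih (insert w (E.erase u)) hwH hvE' ?_
      have hjI' : j ∈ I \ E.image φ := Finset.mem_sdiff.mpr ⟨hjI, hjE⟩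
      have hsubd : I \ (insert w (E.erase u)).image φ ⊆ (I \ E.image φ).erase j := by
        intro c hc
        obtain ⟨hcI, hcE'⟩ := Finset.mem_sdiff.mp hc
        have hcj : c ≠ j := by
          intro h
          exact hcE' (Finset.mem_image.mpr ⟨w, Finset.mem_insert_self w _, h ▸ hwj⟩)
        refine Finset.mem_erase.mpr ⟨hcj, Finset.mem_sdiff.mpr ⟨hcI, fun hcE => ?_⟩⟩
        obtain ⟨x, hx, hxc⟩ := Finset.mem_image.mp hcE
        by_cases hxu : x = u
        · exact huI (hxu ▸ hxc ▸ hcI)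
        · exact hcE' (Finset.mem_image.mpr
            ⟨x, Finset.mem_insert_of_mem (Finset.mem_erase.mpr ⟨hxu, hx⟩), hxc⟩)
      calc (I \ (insert w (E.erase u)).image φ).card
          ≤ ((I \ E.image φ).erase j).card := Finset.card_le_card hsubd
        _ = (I \ E.image φ).card - 1 := Finset.card_erase_of_mem hjI'
        _ ≤ d := by omega
end

section
/- Let k ≥ r > i ≥ 1 be integers and let H be a k-partite r-graph. Then (|H| / C(k,r))^{1/r} ≤ (|∂_i H| / C(k,r-i))^{1/(r-i)}, where ∂_i H is the i-th shadow of H (the set of (r-i)-subsets contained in some edge) and C(a,b) is the binomial coefficient. -/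
/-!
Colour the vertices by `φ` and sort the edges of an `(n+1)`-graph `G` by their colour sets `R`.
The edges with colour set `R` form a family to which the Loomis–Whitney inequality applies, the
projections being sets of the shadow with colour set `R \ {c}`. Writing `g Q` for the number of
shadow sets with colour set `Q`, this gives `|G| ≤ ∑_{|R| = n+1} ∏_{c ∈ R} g (R \ {c}) ^ (1/n)`.

Among the weights `g` on the `n`-sets of colours with a given total `|∂G|`, the constant one
maximises the right-hand side. Averaging `g` with its image under a transposition does not
decrease it: each term of the sum either has a face fixed by the transposition, and is then, up
to the factor of that face, a geometric mean (a concave function) of the other faces, or is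
invariant under the transposition, and AM–GM on the two faces it exchanges applies. A maximiser
of least Euclidean norm is therefore invariant under all transpositions, hence constant on the
`n`-sets. Evaluating at the constant weight gives the case `i = 1`, and the theorem follows by
iterating the shadow.
-/

open Finset
open scoped FinsetFamily

theorem sum_prod_rpow_le_prod_sum_rpow {ι β : Type*} (J : Finset ι) (S : Finset β)
    (x : ι → β → ℝ) (w : ι → ℝ) (hx : ∀ j ∈ J, ∀ b ∈ S, 0 ≤ x j b)
    (hw : ∀ j ∈ J, 0 < w j) (hw1 : ∑ j ∈ J, w j = 1) :
    ∑ b ∈ S, ∏ j ∈ J, x j b ^ w j ≤ ∏ j ∈ J, (∑ b ∈ S, x j b) ^ w j := by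
  have hX : ∀ j ∈ J, 0 ≤ ∑ b ∈ S, x j b := fun j hj => sum_nonneg (hx j hj)
  by_cases hzero : ∃ j ∈ J, ∑ b ∈ S, x j b = 0
  · obtain ⟨j, hj, hXj⟩ := hzero
    have hxj := (sum_eq_zero_iff_of_nonneg (hx j hj)).mp hXj
    calc ∑ b ∈ S, ∏ j ∈ J, x j b ^ w j = 0 :=
          sum_eq_zero fun b hb => prod_eq_zero hj (by rw [hxj b hb, Real.zero_rpow (hw j hj).ne'])
      _ ≤ _ := prod_nonneg fun j hj => Real.rpow_nonneg (hX j hj) _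
  push Not at hzero
  have hXpos : ∀ j ∈ J, 0 < ∑ b ∈ S, x j b := fun j hj => (hX j hj).lt_of_ne' (hzero j hj)
  set X := fun j => ∑ b ∈ S, x j b
  -- weighted AM-GM applied to the normalised values `x j b / X j`
  have hamgm : ∀ b ∈ S, ∏ j ∈ J, x j b ^ w j ≤
      (∑ j ∈ J, w j * (x j b / X j)) * ∏ j ∈ J, X j ^ w j := by
    intro b hb
    calc ∏ j ∈ J, x j b ^ w j
        = (∏ j ∈ J, (x j b / X j) ^ w j) * ∏ j ∈ J, X j ^ w j := by
          rw [← prod_mul_distrib]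
          refine prod_congr rfl fun j hj => ?_
          rw [← Real.mul_rpow (div_nonneg (hx j hj b hb) (hX j hj)) (hX j hj),
            div_mul_cancel₀ _ (hXpos j hj).ne']
      _ ≤ _ := by
          gcongr
          · exact prod_nonneg fun j hj => Real.rpow_nonneg (hX j hj) _
          · exact Real.geom_mean_le_arith_mean_weighted J w _ (fun j hj => (hw j hj).le) hw1
              fun j hj => div_nonneg (hx j hj b hb) (hX j hj)
  have hmean : ∑ b ∈ S, ∑ j ∈ J, w j * (x j b / X j) = 1 := by
    rw [sum_comm, ← hw1]
    refine sum_congr rfl fun j hj => ?_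
    rw [← mul_sum, ← sum_div, div_self (hXpos j hj).ne', mul_one]
  calc ∑ b ∈ S, ∏ j ∈ J, x j b ^ w j
      ≤ ∑ b ∈ S, (∑ j ∈ J, w j * (x j b / X j)) * ∏ j ∈ J, X j ^ w j := sum_le_sum hamgm
    _ = ∏ j ∈ J, X j ^ w j := by rw [← sum_mul, hmean, one_mul]

theorem prod_rpow_add_prod_rpow_le_two_mul {ι : Type*} (J : Finset ι) (u v w : ι → ℝ)
    (hu : ∀ j ∈ J, 0 ≤ u j) (hv : ∀ j ∈ J, 0 ≤ v j) (hw : ∀ j ∈ J, 0 < w j)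
    (hw1 : ∑ j ∈ J, w j = 1) :
    ∏ j ∈ J, u j ^ w j + ∏ j ∈ J, v j ^ w j ≤ 2 * ∏ j ∈ J, ((u j + v j) / 2) ^ w j := by
  have hhalf : ∏ j ∈ J, ((u j + v j) / 2) ^ w j = (∏ j ∈ J, (u j + v j) ^ w j) / 2 := by
    simp_rw [div_eq_mul_inv]
    rw [prod_congr rfl fun j hj => Real.mul_rpow (add_nonneg (hu j hj) (hv j hj)) (by norm_num),
      prod_mul_distrib, ← Real.rpow_sum_of_pos (by norm_num), hw1, Real.rpow_one]
  have holder := sum_prod_rpow_le_prod_sum_rpow J univ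
    (fun j (b : Bool) => if b then u j else v j) w
    (fun j hj b _ => by cases b <;> simp [hu j hj, hv j hj]) hw hw1
  rw [hhalf, mul_div_cancel₀ _ two_ne_zero]
  simpa [Fintype.sum_bool, add_comm] using holder

theorem sum_le_rpow_mul_prod_sum_rpow {ι β : Type*} (n : ℕ) (hn : 1 ≤ n) (J : Finset ι)
    (hJ : #J = n + 1) (T : Finset β) (ℓ : β → ℝ) (m : ι → β → ℝ) (A : ℝ) (hA0 : 0 ≤ A)
    (hℓ : ∀ S ∈ T, 0 ≤ ℓ S) (hm : ∀ c ∈ J, ∀ S ∈ T, 0 ≤ m c S) (hA : ∀ S ∈ T, ℓ S ≤ A)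
    (hprod : ∀ S ∈ T, ℓ S ≤ ∏ c ∈ J, m c S ^ (1 / n : ℝ)) :
    ∑ S ∈ T, ℓ S ≤
      A ^ (1 / (n + 1) : ℝ) * ∏ c ∈ J, (∑ S ∈ T, m c S) ^ (1 / (n + 1) : ℝ) := by
  have hn' : (0 : ℝ) < n := by exact_mod_cast hn
  set w : ℝ := 1 / (n + 1) with hw_def
  have hw0 : 0 < w := by positivity
  have hw1 : w + n * w = 1 := by rw [hw_def]; field_simp; ring
  have hsplit : ∀ S ∈ T, ℓ S ≤ A ^ w * ∏ c ∈ J, m c S ^ w := by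
    intro S hS
    have hm0 : ∀ c ∈ J, 0 ≤ m c S := fun c hc => hm c hc S hS
    calc ℓ S = ℓ S ^ w * ℓ S ^ (n * w) := by
          rw [← Real.rpow_add' (hℓ S hS) (by rw [hw1]; norm_num), hw1, Real.rpow_one]
      _ ≤ A ^ w * (∏ c ∈ J, m c S ^ (1 / n : ℝ)) ^ (n * w) :=
          mul_le_mul (Real.rpow_le_rpow (hℓ S hS) (hA S hS) hw0.le)
            (Real.rpow_le_rpow (hℓ S hS) (hprod S hS) (by positivity))
            (Real.rpow_nonneg (hℓ S hS) _) (Real.rpow_nonneg hA0 _)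
      _ = A ^ w * ∏ c ∈ J, m c S ^ w := by
          rw [← Real.finsetProd_rpow _ _ fun c hc => Real.rpow_nonneg (hm0 c hc) _]
          congr 1
          refine prod_congr rfl fun c hc => ?_
          rw [← Real.rpow_mul (hm0 c hc)]
          congr 1
          rw [hw_def]
          field_simp
  calc ∑ S ∈ T, ℓ S ≤ ∑ S ∈ T, A ^ w * ∏ c ∈ J, m c S ^ w := sum_le_sum hsplit
    _ = A ^ w * ∑ S ∈ T, ∏ c ∈ J, m c S ^ w := (mul_sum _ _ _).symm
    _ ≤ A ^ w * ∏ c ∈ J, (∑ S ∈ T, m c S) ^ w := by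
        refine mul_le_mul_of_nonneg_left ?_ (Real.rpow_nonneg hA0 _)
        refine sum_prod_rpow_le_prod_sum_rpow J T m (fun _ => w) hm (fun _ _ => hw0) ?_
        rw [sum_const, hJ, nsmul_eq_mul, ← hw1]
        push_cast
        ring

theorem sum_sq_avg_comp_lt {ι : Type*} [Fintype ι] (f : ι → ℝ) (e : ι ≃ ι)
    (h : f ∘ e ≠ f) : ∑ i, ((f i + f (e i)) / 2) ^ 2 < ∑ i, f i ^ 2 := by
  obtain ⟨i₀, hi₀⟩ := Function.ne_iff.mp h
  have hsq : ∑ i, f i ^ 2 = ∑ i, (f i ^ 2 + f (e i) ^ 2) / 2 := by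
    rw [← sum_div, sum_add_distrib, Equiv.sum_comp e (fun i => f i ^ 2)]
    ring
  rw [hsq]
  refine sum_lt_sum (fun i _ => by nlinarith [sq_nonneg (f i - f (e i))])
    ⟨i₀, mem_univ _, ?_⟩
  have : 0 < (f i₀ - f (e i₀)) ^ 2 := by
    have : f i₀ - f (e i₀) ≠ 0 := sub_ne_zero.mpr (Ne.symm hi₀)
    positivity
  nlinarith

section LoomisWhitney

variable {V γ : Type*} [DecidableEq V] [DecidableEq γ]

def colorProj (φ : V → γ) (c : γ) (G : Finset (Finset V)) : Finset (Finset V) :=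
  G.image fun E => E.filter fun v => φ v ≠ c

def colorFiber (φ : V → γ) (c : γ) (S : Finset V) (G : Finset (Finset V)) :
    Finset (Finset V) :=
  G.filter fun E => E.filter (fun v => φ v = c) = S

theorem colorProj_comm (φ : V → γ) (c c' : γ) (G : Finset (Finset V)) :
    colorProj φ c (colorProj φ c' G) = colorProj φ c' (colorProj φ c G) := by
  simp only [colorProj, image_image, Function.comp_def, filter_filter, and_comm]

theorem card_colorProj_colorFiber (φ : V → γ) (c : γ) (S : Finset V)
    (G : Finset (Finset V)) :
    #(colorProj φ c (colorFiber φ c S G)) = #(colorFiber φ c S G) := by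
  refine card_image_of_injOn fun E₁ hE₁ E₂ hE₂ h => ?_
  simp only [colorFiber, coe_filter, Set.mem_ofPred_eq] at hE₁ hE₂
  rw [← filter_union_filter_not_eq (fun v => φ v = c) E₁,
    ← filter_union_filter_not_eq (fun v => φ v = c) E₂, hE₁.2, hE₂.2]
  exact congrArg (S ∪ ·) h

theorem colorProj_colorFiber_subset (φ : V → γ) {c c₀ : γ} (hc : c ≠ c₀) (S : Finset V)
    (G : Finset (Finset V)) :
    colorProj φ c (colorFiber φ c₀ S G) ⊆ colorFiber φ c₀ S (colorProj φ c G) := by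
  intro F hF
  obtain ⟨E, hE, rfl⟩ := mem_image.mp hF
  obtain ⟨hEG, hES⟩ := mem_filter.mp hE
  refine mem_filter.mpr ⟨mem_image_of_mem _ hEG, ?_⟩
  rw [filter_filter, ← hES]
  exact filter_congr fun v _ => ⟨And.right, fun h => ⟨h ▸ hc.symm, h⟩⟩

theorem sum_card_colorProj_colorFiber_le (φ : V → γ) {c c₀ : γ} (hc : c ≠ c₀)
    (T : Finset (Finset V)) (G : Finset (Finset V)) :
    ∑ S ∈ T, #(colorProj φ c (colorProj φ c₀ (colorFiber φ c₀ S G))) ≤ #(colorProj φ c G) :=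
  calc ∑ S ∈ T, #(colorProj φ c (colorProj φ c₀ (colorFiber φ c₀ S G)))
      ≤ ∑ S ∈ T, #(colorFiber φ c₀ S (colorProj φ c G)) := by
        refine sum_le_sum fun S _ => ?_
        rw [colorProj_comm]
        exact card_image_le.trans (card_le_card (colorProj_colorFiber_subset φ hc S G))
    _ ≤ #(colorProj φ c G) := by
        simp only [colorFiber]
        rw [sum_card_fiberwise_eq_card_filter]
        exact card_filter_le _ _

theorem card_le_card_colorProj_mul_card_colorProj (φ : V → γ) {c₁ c₂ : γ} (hc : c₁ ≠ c₂)
    (G : Finset (Finset V)) (hG : ∀ E ∈ G, ∀ v ∈ E, φ v = c₁ ∨ φ v = c₂) :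
    #G ≤ #(colorProj φ c₁ G) * #(colorProj φ c₂ G) := by
  rw [← card_product]
  refine card_le_card_of_injOn
    (fun E => (E.filter fun v => φ v ≠ c₁, E.filter fun v => φ v ≠ c₂))
    (fun E hE => mem_product.mpr ⟨mem_image_of_mem _ hE, mem_image_of_mem _ hE⟩) ?_
  have hunion :
      ∀ E ∈ G, E.filter (fun v => φ v ≠ c₁) ∪ E.filter (fun v => φ v ≠ c₂) = E := by
    intro E hE
    rw [← filter_or, filter_true_of_mem]
    intro v hv
    rcases hG E hE v hv with h | h <;> simp [h, hc, hc.symm]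
  intro E₁ hE₁ E₂ hE₂ h
  simp only [Prod.mk.injEq] at h
  rw [← hunion E₁ hE₁, ← hunion E₂ hE₂, h.1, h.2]

theorem card_le_prod_card_colorProj (φ : V → γ) (n : ℕ) (hn : 1 ≤ n) (R : Finset γ)
    (hR : #R = n + 1) (G : Finset (Finset V)) (hG : ∀ E ∈ G, ∀ v ∈ E, φ v ∈ R) :
    (#G : ℝ) ≤ ∏ c ∈ R, (#(colorProj φ c G) : ℝ) ^ (1 / n : ℝ) := by
  induction n, hn using Nat.le_induction generalizing R G with
  | base =>
    obtain ⟨c₁, c₂, hc, rfl⟩ := card_eq_two.mp hR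
    rw [prod_pair hc, Nat.cast_one, div_one, Real.rpow_one, Real.rpow_one]
    exact_mod_cast card_le_card_colorProj_mul_card_colorProj φ hc G
      fun E hE v hv => by simpa using hG E hE v hv
  | succ n hn ih =>
    obtain ⟨c₀, hc₀⟩ : R.Nonempty := card_pos.mp (by omega)
    have hR' : #(R.erase c₀) = n + 1 := by rw [card_erase_of_mem hc₀, hR]; rfl
    -- slice `G` according to the trace of an edge on the colour class `c₀`
    set T := G.image fun E => E.filter fun v => φ v = c₀
    set L := fun S => colorProj φ c₀ (colorFiber φ c₀ S G)
    have hL : ∀ S, ∀ E ∈ L S, ∀ v ∈ E, φ v ∈ R.erase c₀ := by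
      intro S E hE v hv
      obtain ⟨F, hF, rfl⟩ := mem_image.mp hE
      obtain ⟨hvF, hvc⟩ := mem_filter.mp hv
      exact mem_erase.mpr ⟨hvc, hG F (mem_filter.mp hF).1 v hvF⟩
    have hsum : (#G : ℝ) = ∑ S ∈ T, (#(L S) : ℝ) := by
      rw [card_eq_sum_card_image (fun E => E.filter fun v => φ v = c₀) G]
      push_cast
      exact sum_congr rfl fun S _ => by rw [card_colorProj_colorFiber]; rfl
    have hstep := sum_le_rpow_mul_prod_sum_rpow n hn (R.erase c₀) hR' T
      (fun S => (#(L S) : ℝ)) (fun c S => (#(colorProj φ c (L S)) : ℝ)) (#(colorProj φ c₀ G))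
      (Nat.cast_nonneg _)
      (fun _ _ => Nat.cast_nonneg _) (fun _ _ _ _ => Nat.cast_nonneg _)
      (fun S _ => by exact_mod_cast card_le_card (image_subset_image (filter_subset _ G)))
      (fun S _ => ih (R.erase c₀) hR' (L S) (hL S))
    rw [hsum, ← mul_prod_erase R
      (fun c => (#(colorProj φ c G) : ℝ) ^ (1 / ((n + 1 : ℕ) : ℝ))) hc₀]
    push_cast at hstep ⊢
    refine hstep.trans (mul_le_mul_of_nonneg_left ?_ (by positivity))
    have hsum_nonneg : ∀ c, 0 ≤ ∑ S ∈ T, (#(colorProj φ c (L S)) : ℝ) :=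
      fun c => sum_nonneg fun _ _ => Nat.cast_nonneg _
    refine prod_le_prod (fun c _ => Real.rpow_nonneg (hsum_nonneg c) _)
      fun c hc => Real.rpow_le_rpow (hsum_nonneg c) ?_ (by positivity)
    exact_mod_cast sum_card_colorProj_colorFiber_le φ (ne_of_mem_erase hc) T G

end LoomisWhitney

theorem sum_powersetCard_comp_finsetCongr {α β : Type*} [Fintype α] [AddCommMonoid β]
    (k : ℕ) (f : Finset α → β) (σ : Equiv.Perm α) :
    ∑ P ∈ powersetCard k univ, f (σ.finsetCongr P) = ∑ P ∈ powersetCard k univ, f P :=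
  sum_equiv σ.finsetCongr (by simp) fun _ _ => rfl

theorem eq_of_card_eq_of_forall_swap {α β : Type*} [Fintype α] [DecidableEq α]
    {g : Finset α → β} (hg : ∀ a b : α, g ∘ (Equiv.swap a b).finsetCongr = g)
    {P Q : Finset α} (hPQ : #P = #Q) : g P = g Q := by
  have hperm : ∀ σ : Equiv.Perm α, g ∘ σ.finsetCongr = g := fun σ => by
    induction σ using Equiv.Perm.swap_induction_on with
    | one => rw [Equiv.Perm.one_def, Equiv.finsetCongr_refl]; rfl
    | swap_mul f x y _ ih =>
      rw [Equiv.Perm.mul_def, ← Equiv.finsetCongr_trans, Equiv.coe_trans,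
        ← Function.comp_assoc, hg, ih]
  obtain ⟨σ, hσ⟩ := Equiv.Perm.exists_map_finset_eq P Q hPQ
  rw [← hσ, ← Equiv.finsetCongr_apply, ← Function.comp_apply (f := g), hperm]

section FaceSum

variable {α : Type*} [DecidableEq α]

noncomputable def faceProd (n : ℕ) (g : Finset α → ℝ) (R : Finset α) : ℝ :=
  ∏ c ∈ R, g (R.erase c) ^ (1 / n : ℝ)

theorem faceProd_nonneg (n : ℕ) {g : Finset α → ℝ} (hg : ∀ P, 0 ≤ g P) (R : Finset α) :
    0 ≤ faceProd n g R :=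
  prod_nonneg fun _ _ => Real.rpow_nonneg (hg _) _

theorem faceProd_comp_finsetCongr (n : ℕ) (g : Finset α → ℝ) (σ : Equiv.Perm α)
    (R : Finset α) : faceProd n (g ∘ σ.finsetCongr) R = faceProd n g (σ.finsetCongr R) := by
  simp only [faceProd, Function.comp_apply, Equiv.finsetCongr_apply, prod_map, map_erase]

theorem faceProd_mul_faceProd_le_sq (n : ℕ) {g g' : Finset α → ℝ} (hg : ∀ P, 0 ≤ g P)
    (hg' : ∀ P, 0 ≤ g' P) (R : Finset α) :
    faceProd n g R * faceProd n g' R ≤ faceProd n (fun P => (g P + g' P) / 2) R ^ 2 := by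
  rw [faceProd, faceProd, faceProd, ← prod_mul_distrib, ← prod_pow]
  refine prod_le_prod (fun c _ => mul_nonneg (Real.rpow_nonneg (hg _) _)
    (Real.rpow_nonneg (hg' _) _)) fun c _ => ?_
  have hmid : 0 ≤ (g (R.erase c) + g' (R.erase c)) / 2 :=
    div_nonneg (add_nonneg (hg _) (hg' _)) two_pos.le
  rw [← Real.mul_rpow (hg _) (hg' _), sq, ← Real.mul_rpow hmid hmid]
  refine Real.rpow_le_rpow (mul_nonneg (hg _) (hg' _)) ?_ (by positivity)
  nlinarith [sq_nonneg (g (R.erase c) - g' (R.erase c))]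

theorem faceProd_add_faceProd_le_of_eq {n : ℕ} (hn : 1 ≤ n) {g g' : Finset α → ℝ}
    (hg : ∀ P, 0 ≤ g P) (hg' : ∀ P, 0 ≤ g' P) {R : Finset α} (hR : #R = n + 1) {c : α}
    (hc : c ∈ R) (hface : g (R.erase c) = g' (R.erase c)) :
    faceProd n g R + faceProd n g' R ≤ 2 * faceProd n (fun P => (g P + g' P) / 2) R := by
  have hn' : (n : ℝ) ≠ 0 := by positivity
  have hsum : ∑ _ ∈ R.erase c, (1 / n : ℝ) = 1 := by
    rw [sum_const, card_erase_of_mem hc, hR, nsmul_eq_mul]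
    field_simp
    simp
  have key := prod_rpow_add_prod_rpow_le_two_mul (R.erase c) (fun d => g (R.erase d))
    (fun d => g' (R.erase d)) (fun _ => 1 / n) (fun _ _ => hg _) (fun _ _ => hg' _)
    (fun _ _ => by positivity) hsum
  simp only [faceProd, ← mul_prod_erase R _ hc, ← hface, add_self_div_two]
  have hc0 : 0 ≤ g (R.erase c) ^ (1 / n : ℝ) := Real.rpow_nonneg (hg _) _
  nlinarith [mul_le_mul_of_nonneg_left key hc0]

theorem faceProd_add_faceProd_swap_le {n : ℕ} (hn : 1 ≤ n) {g : Finset α → ℝ}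
    (hg : ∀ P, 0 ≤ g P) (a b : α) {R : Finset α} (hR : #R = n + 1) :
    faceProd n g R + faceProd n (g ∘ (Equiv.swap a b).finsetCongr) R ≤
      2 * faceProd n (fun P => (g P + (g ∘ (Equiv.swap a b).finsetCongr) P) / 2) R := by
  set τ := Equiv.swap a b
  have hgτ : ∀ P, 0 ≤ (g ∘ τ.finsetCongr) P := fun P => hg _
  by_cases hab : a ∈ R ∧ b ∈ R
  · have hτR : τ.finsetCongr R = R := by
      rw [Equiv.finsetCongr_apply]
      refine map_perm fun x hx => ?_
      rcases eq_or_ne x a with rfl | hxa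
      · exact hab.1
      rcases eq_or_ne x b with rfl | hxb
      · exact hab.2
      exact absurd (Equiv.swap_apply_of_ne_of_ne hxa hxb) hx
    have heq : faceProd n (g ∘ τ.finsetCongr) R = faceProd n g R := by
      rw [faceProd_comp_finsetCongr, hτR]
    have hsq := faceProd_mul_faceProd_le_sq n hg hgτ R
    rw [heq, ← sq] at hsq
    have := (pow_le_pow_iff_left₀ (faceProd_nonneg n hg R)
      (faceProd_nonneg n (fun P => div_nonneg (add_nonneg (hg P) (hgτ P)) two_pos.le) R)
      two_ne_zero).mp hsq
    linarith
  · obtain ⟨c, hc, hac, hbc⟩ : ∃ c ∈ R, a ∉ R.erase c ∧ b ∉ R.erase c := by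
      by_cases ha : a ∈ R
      · exact ⟨a, ha, notMem_erase a R, fun h => hab ⟨ha, mem_of_mem_erase h⟩⟩
      by_cases hb : b ∈ R
      · exact ⟨b, hb, fun h => ha (mem_of_mem_erase h), notMem_erase b R⟩
      obtain ⟨c, hc⟩ : R.Nonempty := card_pos.mp (by omega)
      exact ⟨c, hc, fun h => ha (mem_of_mem_erase h), fun h => hb (mem_of_mem_erase h)⟩
    refine faceProd_add_faceProd_le_of_eq hn hg hgτ hR hc ?_
    have hfix : τ.finsetCongr (R.erase c) = R.erase c := by
      rw [Equiv.finsetCongr_apply]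
      refine map_eq_of_subset fun y hy => ?_
      obtain ⟨x, hx, rfl⟩ := mem_map.mp hy
      rwa [Equiv.coe_toEmbedding, Equiv.swap_apply_of_ne_of_ne (ne_of_mem_of_not_mem hx hac)
        (ne_of_mem_of_not_mem hx hbc)]
    simp only [Function.comp_apply, hfix]

variable [Fintype α]

noncomputable def faceSum (n : ℕ) (g : Finset α → ℝ) : ℝ :=
  ∑ R ∈ powersetCard (n + 1) univ, faceProd n g R

theorem faceSum_comp_finsetCongr (n : ℕ) (g : Finset α → ℝ) (σ : Equiv.Perm α) :
    faceSum n (g ∘ σ.finsetCongr) = faceSum n g := by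
  simp only [faceSum, faceProd_comp_finsetCongr]
  exact sum_powersetCard_comp_finsetCongr (n + 1) (faceProd n g) σ

theorem faceSum_le_faceSum_swap_avg {n : ℕ} (hn : 1 ≤ n) {g : Finset α → ℝ}
    (hg : ∀ P, 0 ≤ g P) (a b : α) :
    faceSum n g ≤
      faceSum n (fun P => (g P + (g ∘ (Equiv.swap a b).finsetCongr) P) / 2) := by
  have key : faceSum n g + faceSum n (g ∘ (Equiv.swap a b).finsetCongr) ≤
      2 * faceSum n (fun P => (g P + (g ∘ (Equiv.swap a b).finsetCongr) P) / 2) := by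
    simp only [faceSum, ← sum_add_distrib, mul_sum]
    exact sum_le_sum fun R hR =>
      faceProd_add_faceProd_swap_le hn hg a b (mem_powersetCard_univ.mp hR)
  rw [faceSum_comp_finsetCongr] at key
  linarith

theorem continuous_faceSum (n : ℕ) : Continuous (faceSum (α := α) n) :=
  continuous_finsetSum _ fun _ _ => continuous_finsetProd _ fun _ _ =>
    (Real.continuous_rpow_const (by positivity)).comp (continuous_apply _)

theorem faceSum_eq_rpow_mul {n : ℕ} {g g' : Finset α → ℝ} {T : ℝ} (hT : 0 ≤ T)
    (hg' : ∀ P, 0 ≤ g' P) (h : ∀ P, #P = n → g P = T * g' P) :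
    faceSum n g = T ^ ((n + 1) / n : ℝ) * faceSum n g' := by
  rw [faceSum, faceSum, mul_sum]
  refine sum_congr rfl fun R hR => ?_
  have hR := mem_powersetCard_univ.mp hR
  have hface : ∀ c ∈ R,
      g (R.erase c) ^ (1 / n : ℝ) = T ^ (1 / n : ℝ) * g' (R.erase c) ^ (1 / n : ℝ) :=
    fun c hc => by
      rw [h _ (by rw [card_erase_of_mem hc, hR]; rfl), Real.mul_rpow hT (hg' _)]
  rw [faceProd, prod_congr rfl hface, prod_mul_distrib, prod_const, hR, faceProd,
    ← Real.rpow_natCast, ← Real.rpow_mul hT]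
  congr 2
  push_cast
  ring

theorem faceSum_of_forall_card_eq {n : ℕ} {g : Finset α → ℝ} {x : ℝ} (hx : 0 ≤ x)
    (h : ∀ P, #P = n → g P = x) :
    faceSum n g = (Fintype.card α).choose (n + 1) * x ^ ((n + 1) / n : ℝ) := by
  rw [faceSum_eq_rpow_mul hx (g' := fun _ => 1) (fun _ => zero_le_one)
    (fun P hP => by rw [h P hP, mul_one])]
  simp [faceSum, faceProd, card_powersetCard, mul_comm]

end FaceSum

section Extremal

variable {α : Type*} [Fintype α]

def sliceSimplex (n : ℕ) : Set (Finset α → ℝ) :=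
  stdSimplex ℝ (Finset α) ∩ {g | ∀ P : Finset α, #P ≠ n → g P = 0}

theorem isCompact_sliceSimplex (n : ℕ) : IsCompact (sliceSimplex (α := α) n) := by
  refine (isCompact_stdSimplex ℝ _).inter_right ?_
  simp only [Set.ofPred_forall]
  exact isClosed_iInter fun P => isClosed_iInter fun _ =>
    isClosed_eq (continuous_apply P) continuous_const

theorem sum_powersetCard_of_mem_sliceSimplex {n : ℕ} {g : Finset α → ℝ}
    (hg : g ∈ sliceSimplex n) : ∑ P ∈ powersetCard n univ, g P = 1 := by
  rw [← hg.1.2]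
  exact sum_subset (subset_univ _) fun P _ hP => hg.2 P (by simpa using hP)

variable [DecidableEq α]

theorem swap_avg_mem_sliceSimplex {n : ℕ} {g : Finset α → ℝ} (hg : g ∈ sliceSimplex n)
    (a b : α) :
    (fun P => (g P + (g ∘ (Equiv.swap a b).finsetCongr) P) / 2) ∈ sliceSimplex n := by
  obtain ⟨⟨hg0, hg1⟩, hgn⟩ := hg
  refine ⟨⟨fun P => div_nonneg (add_nonneg (hg0 _) (hg0 _)) two_pos.le, ?_⟩, fun P hP => ?_⟩
  · rw [← sum_div, sum_add_distrib, Function.comp_def,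
      Equiv.sum_comp (Equiv.swap a b).finsetCongr g, hg1]
    norm_num
  · have : #((Equiv.swap a b).finsetCongr P) ≠ n := by simpa using hP
    simp only [Function.comp_apply, hgn P hP, hgn _ this]
    norm_num

theorem exists_swap_invariant_isMaxOn_faceSum {n : ℕ} (hn : 1 ≤ n)
    (hne : (sliceSimplex (α := α) n).Nonempty) :
    ∃ g₀ ∈ sliceSimplex n, (∀ a b : α, g₀ ∘ (Equiv.swap a b).finsetCongr = g₀) ∧
      IsMaxOn (faceSum n) (sliceSimplex n) g₀ := by
  obtain ⟨gmax, hgmax, hmax⟩ :=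
    (isCompact_sliceSimplex n).exists_isMaxOn hne (continuous_faceSum n).continuousOn
  -- among the maximisers, take one of least Euclidean norm
  have hM : IsCompact (sliceSimplex (α := α) n ∩ faceSum n ⁻¹' {faceSum n gmax}) :=
    (isCompact_sliceSimplex n).inter_right (isClosed_singleton.preimage (continuous_faceSum n))
  have hsq : Continuous fun g : Finset α → ℝ => ∑ P, g P ^ 2 := by fun_prop
  obtain ⟨g₀, ⟨hg₀, hg₀max⟩, hmin⟩ :=
    hM.exists_isMinOn ⟨gmax, hgmax, Set.mem_singleton _⟩ hsq.continuousOn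
  replace hg₀max : faceSum n g₀ = faceSum n gmax := hg₀max
  refine ⟨g₀, hg₀, fun a b => ?_, fun g hg => (hmax hg).trans_eq hg₀max.symm⟩
  by_contra hne
  have hh := swap_avg_mem_sliceSimplex hg₀ a b
  have hhM : _ ∈ sliceSimplex n ∩ faceSum n ⁻¹' {faceSum n gmax} :=
    ⟨hh, le_antisymm (hmax hh) (hg₀max ▸ faceSum_le_faceSum_swap_avg hn hg₀.1.1 a b)⟩
  exact (hmin hhM).not_gt (sum_sq_avg_comp_lt g₀ _ hne)

theorem faceSum_le_of_mem_sliceSimplex {n : ℕ} (hn : 1 ≤ n) {g : Finset α → ℝ}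
    (hg : g ∈ sliceSimplex n) :
    faceSum n g ≤ (Fintype.card α).choose (n + 1) *
      (1 / (Fintype.card α).choose n : ℝ) ^ ((n + 1) / n : ℝ) := by
  obtain ⟨g₀, hg₀, hsym, hmax⟩ := exists_swap_invariant_isMaxOn_faceSum hn ⟨g, hg⟩
  have hsum := sum_powersetCard_of_mem_sliceSimplex hg₀
  obtain ⟨P₀, hP₀⟩ : (powersetCard n (univ : Finset α)).Nonempty := by
    by_contra h
    simp [not_nonempty_iff_eq_empty.mp h] at hsum
  have hconst : ∀ P, #P = n → g₀ P = g₀ P₀ := fun P hP =>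
    eq_of_card_eq_of_forall_swap hsym (hP.trans (mem_powersetCard_univ.mp hP₀).symm)
  rw [sum_congr rfl fun P hP => hconst P (mem_powersetCard_univ.mp hP), sum_const,
    card_powersetCard, card_univ, nsmul_eq_mul] at hsum
  have hval : g₀ P₀ = 1 / (Fintype.card α).choose n := by
    rw [eq_div_iff (left_ne_zero_of_mul_eq_one hsum), mul_comm, hsum]
  calc faceSum n g ≤ faceSum n g₀ := hmax hg
    _ = _ := by rw [faceSum_of_forall_card_eq (hg₀.1.1 P₀) hconst, hval]

theorem faceSum_le {n : ℕ} (hn : 1 ≤ n) {g : Finset α → ℝ} (hg : ∀ P, 0 ≤ g P) :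
    faceSum n g ≤ (Fintype.card α).choose (n + 1) *
      ((∑ P ∈ powersetCard n univ, g P) / (Fintype.card α).choose n) ^ ((n + 1) / n : ℝ) := by
  set T := ∑ P ∈ powersetCard n univ, g P
  have hT : 0 ≤ T := sum_nonneg fun P _ => hg P
  have hp : ((n + 1) / n : ℝ) ≠ 0 := by positivity
  rcases hT.eq_or_lt with hT0 | hTpos
  · have hzero : ∀ P, #P = n → g P = T * 0 := fun P hP => by
      rw [mul_zero]
      exact (sum_eq_zero_iff_of_nonneg fun P _ => hg P).mp hT0.symm P
        (mem_powersetCard_univ.mpr hP)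
    rw [faceSum_eq_rpow_mul hT (fun _ => le_rfl) hzero, ← hT0, zero_div,
      Real.zero_rpow hp, zero_mul, mul_zero]
  set g' : Finset α → ℝ := fun P => if #P = n then g P / T else 0
  have hg' : g' ∈ sliceSimplex n := by
    refine ⟨⟨fun P => ?_, ?_⟩, fun P hP => if_neg hP⟩
    · simp only [g']
      split_ifs
      exacts [div_nonneg (hg P) hT, le_rfl]
    · rw [← sum_filter, ← sum_div, div_eq_one_iff_eq hTpos.ne']
      exact sum_congr (by ext; simp) fun _ _ => rfl
  have hscale : ∀ P, #P = n → g P = T * g' P := fun P hP => by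
    simp only [g', if_pos hP]
    field_simp
  rw [faceSum_eq_rpow_mul hT hg'.1.1 hscale]
  calc T ^ ((n + 1) / n : ℝ) * faceSum n g'
      ≤ T ^ ((n + 1) / n : ℝ) * ((Fintype.card α).choose (n + 1) *
          (1 / (Fintype.card α).choose n : ℝ) ^ ((n + 1) / n : ℝ)) :=
        mul_le_mul_of_nonneg_left (faceSum_le_of_mem_sliceSimplex hn hg') (by positivity)
    _ = _ := by
        rw [mul_left_comm, ← Real.mul_rpow hT (by positivity), mul_one_div]

end Extremal

section Partite

variable {V α : Type*} [DecidableEq V] [DecidableEq α]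

theorem filter_ne_eq_erase_of_injOn {φ : V → α} {E : Finset V} (hE : Set.InjOn φ E) {v : V}
    (hv : v ∈ E) : E.filter (fun u => φ u ≠ φ v) = E.erase v := by
  ext u
  simp only [mem_filter, mem_erase]
  exact ⟨fun ⟨hu, hne⟩ => ⟨fun h => hne (h ▸ rfl), hu⟩,
    fun ⟨hne, hu⟩ => ⟨hu, fun h => hne (hE hu hv h)⟩⟩

theorem colorProj_subset_filter_shadow {φ : V → α} {G G' : Finset (Finset V)} (hG' : G' ⊆ G)
    (hpart : ∀ E ∈ G', Set.InjOn φ E) {R : Finset α} (himg : ∀ E ∈ G', E.image φ = R) {c : α}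
    (hc : c ∈ R) : colorProj φ c G' ⊆ (∂ G).filter fun f => f.image φ = R.erase c := by
  intro F hF
  obtain ⟨E, hE, rfl⟩ := mem_image.mp hF
  obtain ⟨v, hv, rfl⟩ := mem_image.mp (himg E hE ▸ hc)
  refine mem_filter.mpr ⟨?_, ?_⟩
  · rw [filter_ne_eq_erase_of_injOn (hpart E hE) hv]
    exact erase_mem_shadow (hG' hE) hv
  · rw [← filter_ne', ← himg E hE, filter_image]

variable [Fintype α]

theorem card_le_choose_mul_card_shadow_rpow (φ : V → α) {n : ℕ} (hn : 1 ≤ n)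
    {G : Finset (Finset V)} (hG : (G : Set (Finset V)).Sized (n + 1))
    (hpart : ∀ E ∈ G, Set.InjOn φ E) :
    (#G : ℝ) ≤ (Fintype.card α).choose (n + 1) *
      ((#(∂ G) : ℝ) / (Fintype.card α).choose n) ^ ((n + 1) / n : ℝ) := by
  set g : Finset α → ℝ := fun Q => #((∂ G).filter fun f => f.image φ = Q)
  have hcolors : ∀ E ∈ G, E.image φ ∈ powersetCard (n + 1) univ := fun E hE => by
    rw [mem_powersetCard_univ, card_image_of_injOn (hpart E hE), hG hE]
  have hshadow_colors : ∀ f ∈ ∂ G, f.image φ ∈ powersetCard n univ := fun f hf => by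
    obtain ⟨E, hE, hfE⟩ := exists_subset_of_mem_shadow hf
    rw [mem_powersetCard_univ, card_image_of_injOn ((hpart E hE).mono (by simpa using hfE)),
      hG.shadow hf, Nat.add_sub_cancel]
  have hslice : ∀ R ∈ powersetCard (n + 1) univ,
      (#(G.filter fun E => E.image φ = R) : ℝ) ≤ faceProd n g R := by
    intro R hR
    have hsub := filter_subset (fun E => E.image φ = R) G
    have himg : ∀ E ∈ G.filter (fun E => E.image φ = R), E.image φ = R :=
      fun E hE => (mem_filter.mp hE).2
    refine (card_le_prod_card_colorProj φ n hn R (mem_powersetCard_univ.mp hR) _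
      fun E hE v hv => himg E hE ▸ mem_image_of_mem φ hv).trans ?_
    refine prod_le_prod (fun _ _ => by positivity) fun c hc => ?_
    exact Real.rpow_le_rpow (by positivity) (Nat.cast_le.mpr (card_le_card
      (colorProj_subset_filter_shadow hsub (fun E hE => hpart E (hsub hE)) himg hc)))
      (by positivity)
  have hshadow : ∑ Q ∈ powersetCard n univ, g Q = #(∂ G) := by
    rw [card_eq_sum_card_fiberwise hshadow_colors]
    push_cast
    rfl
  calc (#G : ℝ)
      = ∑ R ∈ powersetCard (n + 1) univ, (#(G.filter fun E => E.image φ = R) : ℝ) := by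
        rw [card_eq_sum_card_fiberwise hcolors]
        push_cast
        rfl
    _ ≤ faceSum n g := sum_le_sum hslice
    _ ≤ _ := hshadow ▸ faceSum_le hn fun _ => Nat.cast_nonneg _

theorem rpow_card_div_choose_le_shadow (φ : V → α) {n : ℕ} (hn : 1 ≤ n)
    {G : Finset (Finset V)} (hG : (G : Set (Finset V)).Sized (n + 1))
    (hpart : ∀ E ∈ G, Set.InjOn φ E) :
    ((#G : ℝ) / (Fintype.card α).choose (n + 1)) ^ (1 / ((n + 1 : ℕ) : ℝ)) ≤
      ((#(∂ G) : ℝ) / (Fintype.card α).choose n) ^ (1 / (n : ℝ)) := by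
  set X := (#(∂ G) : ℝ) / (Fintype.card α).choose n
  have hX : 0 ≤ X := by positivity
  rcases (Nat.zero_le ((Fintype.card α).choose (n + 1))).eq_or_lt with hK | hK
  · -- fewer than `n + 1` colours: the left side is `0` because `x / 0 = 0`
    rw [← hK, Nat.cast_zero, div_zero, Real.zero_rpow (by positivity)]
    exact Real.rpow_nonneg hX _
  have hK' : (0 : ℝ) < (Fintype.card α).choose (n + 1) := by exact_mod_cast hK
  have hbound : (#G : ℝ) / (Fintype.card α).choose (n + 1) ≤ X ^ ((n + 1) / n : ℝ) := by
    rw [div_le_iff₀ hK', mul_comm]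
    exact card_le_choose_mul_card_shadow_rpow φ hn hG hpart
  calc ((#G : ℝ) / (Fintype.card α).choose (n + 1)) ^ (1 / ((n + 1 : ℕ) : ℝ))
      ≤ (X ^ ((n + 1) / n : ℝ)) ^ (1 / ((n + 1 : ℕ) : ℝ)) :=
        Real.rpow_le_rpow (by positivity) hbound (by positivity)
    _ = X ^ (1 / (n : ℝ)) := by
        rw [← Real.rpow_mul hX]
        congr 1
        push_cast
        field_simp

end Partite

theorem shadow_iterate_eq_filter {V : Type*} [Fintype V] [DecidableEq V] {r i : ℕ}
    (hir : i ≤ r) {H : Finset (Finset V)} (hH : (H : Set (Finset V)).Sized r) :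
    ∂^[i] H = (univ : Finset (Finset V)).filter (fun f => #f = r - i ∧ ∃ E ∈ H, f ⊆ E) := by
  ext f
  simp only [mem_shadow_iterate_iff_exists_mem_card_add, mem_filter, mem_univ, true_and]
  constructor
  · rintro ⟨E, hE, hfE, hcard⟩
    exact ⟨by rw [← hH hE, hcard]; omega, E, hE, hfE⟩
  · rintro ⟨hf, E, hE, hfE⟩
    exact ⟨E, hE, hfE, by rw [hH hE, hf]; omega⟩

theorem stmt19_general {V : Type*} [Fintype V] [DecidableEq V] (k r i : ℕ)
    (hir : i < r)
    (H : Finset (Finset V)) (hcard : ∀ E ∈ H, E.card = r)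
    (φ : V → Fin k) (hpart : ∀ E ∈ H, Set.InjOn φ ↑E) :
    ((H.card : ℝ) / (k.choose r : ℝ)) ^ ((1 : ℝ) / (r : ℝ)) ≤
    ((((Finset.univ : Finset (Finset V)).filter
        (fun f => f.card = r - i ∧ ∃ E ∈ H, f ⊆ E)).card : ℝ) / (k.choose (r - i) : ℝ))
      ^ ((1 : ℝ) / ((r - i : ℕ) : ℝ)) := by
  have hH : (H : Set (Finset V)).Sized r := hcard
  set a : ℕ → ℝ :=
    fun j => ((#(∂^[j] H) : ℝ) / k.choose (r - j)) ^ (1 / ((r - j : ℕ) : ℝ))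
  have hstep : ∀ j < i, a j ≤ a (j + 1) := by
    intro j hj
    have hrj : r - j = r - (j + 1) + 1 := by omega
    have hpart' : ∀ E ∈ ∂^[j] H, Set.InjOn φ E := fun E hE => by
      obtain ⟨F, hF, hEF, -⟩ := mem_shadow_iterate_iff_exists_sdiff.mp hE
      exact (hpart F hF).mono (by simpa using hEF)
    have := rpow_card_div_choose_le_shadow φ (by omega : 1 ≤ r - (j + 1))
      (hrj ▸ hH.shadow_iterate) hpart'
    simp only [Fintype.card_fin, ← Function.iterate_succ_apply' Finset.shadow] at this
    simpa only [a, hrj] using this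
  have hchain : ∀ j ≤ i, a 0 ≤ a j := by
    intro j hj
    induction j with
    | zero => exact le_rfl
    | succ j ih => exact (ih (by omega)).trans (hstep j (by omega))
  simpa [a, shadow_iterate_eq_filter hir.le hH] using hchain i le_rfl

/-- Frankl–Füredi–Kalai Kruskal–Katona-type theorem for k-partite r-graphs:
(|H|/C(k,r))^{1/r} ≤ (|∂_i H|/C(k,r-i))^{1/(r-i)}. -/
theorem stmt19 {V : Type*} [Fintype V] [DecidableEq V] (k r i : ℕ)
    (hi : 1 ≤ i) (hir : i < r) (hrk : r ≤ k)
    (H : Finset (Finset V)) (hcard : ∀ E ∈ H, E.card = r)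
    (φ : V → Fin k) (hpart : ∀ E ∈ H, Set.InjOn φ ↑E) :
    ((H.card : ℝ) / (k.choose r : ℝ)) ^ ((1 : ℝ) / (r : ℝ)) ≤
    ((((Finset.univ : Finset (Finset V)).filter
        (fun f => f.card = r - i ∧ ∃ E ∈ H, f ⊆ E)).card : ℝ) / (k.choose (r - i) : ℝ))
      ^ ((1 : ℝ) / ((r - i : ℕ) : ℝ)) :=
  stmt19_general k r i hir H hcard φ hpart
end
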